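/- arXiv:2308.06660 — 6 statements merged into one kernel-verified Lean document; each statement's English description precedes it below -/
import Mathlib

section
/- Let P* be the polynomial ring over ℤ in variables x_m (one for each integer m ≥ 1) together with two further variables y and z, and let 𝔟* be the ideal of P* generated by the elements 1 + x₂ − x₁; 1 + x₃ − x₂; 1 + x₄ − x₃ + 3y; 1 + x_{m+1} − x_m + y for every m ≥ 4; 1 + z + y + x₄; and y(z − y). Then there is a ring isomorphism P*/𝔟* → ℤ[u,v]/(uv) sending x₁ ↦ u+v+2, x₂ ↦ u+v+1, x₃ ↦ u+v, x_m ↦ v+1−(m−2)(u+1) for every m ≥ 4, y ↦ u, and z ↦ u−v. -/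
open MvPolynomial

/-- Index type for the polynomial ring `P*`: one variable `x m` for each integer `m ≥ 1`,
together with two further variables `y` and `z`. -/
inductive PVar : Type where
  | x : {m : ℕ // 1 ≤ m} → PVar
  | y : PVar
  | z : PVar

/-- The variable `x_m` (for `m ≥ 1`). -/
noncomputable def xv (m : ℕ) (h : 1 ≤ m) : MvPolynomial PVar ℤ := X (PVar.x ⟨m, h⟩)

noncomputable def yv : MvPolynomial PVar ℤ := X PVar.y

noncomputable def zv : MvPolynomial PVar ℤ := X PVar.z

/-- The ideal `𝔟*` of `P*`. -/
noncomputable def bstar : Ideal (MvPolynomial PVar ℤ) :=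
  Ideal.span
    (({1 + xv 2 (by norm_num) - xv 1 (by norm_num),
       1 + xv 3 (by norm_num) - xv 2 (by norm_num),
       1 + xv 4 (by norm_num) - xv 3 (by norm_num) + 3 * yv,
       1 + zv + yv + xv 4 (by norm_num),
       yv * (zv - yv)} : Set (MvPolynomial PVar ℤ)) ∪
     {p | ∃ (m : ℕ) (hm : 4 ≤ m),
        p = 1 + xv (m + 1) (by omega) - xv m (by omega) + yv})

noncomputable def uPoly : MvPolynomial (Fin 2) ℤ := X 0

noncomputable def vPoly : MvPolynomial (Fin 2) ℤ := X 1

/-- The ideal `(uv)` of `ℤ[u,v]`. -/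
noncomputable def uvIdeal : Ideal (MvPolynomial (Fin 2) ℤ) := Ideal.span {uPoly * vPoly}

/-
The relations of `𝔟*` let one solve successively for `x₄, x₃, x₂, x₁` and then `x_m` (`m ≥ 4`)
in terms of `y` and `z`, so `P*/𝔟* ≅ ℤ[y, z]/(y(z - y))`. The substitution `u = y`, `v = y - z`
turns this into `ℤ[u, v]/(uv)`.
-/

local notation "π" => Ideal.Quotient.mk bstar

noncomputable def thetaVar : PVar → MvPolynomial (Fin 2) ℤ
  | .x ⟨m, _⟩ =>
      if m ≤ 3 then uPoly + vPoly + ((3 - m : ℤ) : MvPolynomial (Fin 2) ℤ)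
      else vPoly + 1 - ((m : MvPolynomial (Fin 2) ℤ) - 2) * (uPoly + 1)
  | .y => uPoly
  | .z => uPoly - vPoly

noncomputable def psiVar : Fin 2 → MvPolynomial PVar ℤ := ![yv, yv - zv]

lemma bind₁_thetaVar_xv_of_le_three {m : ℕ} (h : 1 ≤ m) (hm : m ≤ 3) :
    bind₁ thetaVar (xv m h) = uPoly + vPoly + ((3 - m : ℤ) : MvPolynomial (Fin 2) ℤ) := by
  simp [xv, thetaVar, hm]

lemma bind₁_thetaVar_xv_of_four_le {m : ℕ} (h : 1 ≤ m) (hm : 4 ≤ m) :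
    bind₁ thetaVar (xv m h) = vPoly + 1 - ((m : MvPolynomial (Fin 2) ℤ) - 2) * (uPoly + 1) := by
  simp [xv, thetaVar, show ¬ m ≤ 3 by omega]

@[simp] lemma bind₁_thetaVar_yv : bind₁ thetaVar yv = uPoly := by simp [yv, thetaVar]

@[simp] lemma bind₁_thetaVar_zv : bind₁ thetaVar zv = uPoly - vPoly := by simp [zv, thetaVar]

@[simp] lemma bind₁_psiVar_uPoly : bind₁ psiVar uPoly = yv := by simp [uPoly, psiVar]

@[simp] lemma bind₁_psiVar_vPoly : bind₁ psiVar vPoly = yv - zv := by simp [vPoly, psiVar]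

lemma bstar_le_comap_bind₁_thetaVar : bstar ≤ uvIdeal.comap (bind₁ thetaVar) := by
  rw [bstar, Ideal.span_le]
  rintro p (hp | ⟨m, hm, rfl⟩) <;> rw [SetLike.mem_coe, Ideal.mem_comap]
  · simp only [Set.mem_insert_iff, Set.mem_singleton_iff] at hp
    rcases hp with rfl | rfl | rfl | rfl | rfl <;>
      simp [bind₁_thetaVar_xv_of_le_three, bind₁_thetaVar_xv_of_four_le, map_ofNat] <;> ring_nf
    -- every generator but `y(z - y)` maps to `0`; that one maps to `-uv`
    all_goals first | exact uvIdeal.zero_mem | exact Ideal.mem_span_singleton_self _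
  · simp only [map_add, map_sub, map_one, bind₁_thetaVar_yv,
      bind₁_thetaVar_xv_of_four_le _ hm, bind₁_thetaVar_xv_of_four_le _ (hm.trans m.le_succ)]
    push_cast
    ring_nf
    exact uvIdeal.zero_mem

lemma uvIdeal_le_comap_bind₁_psiVar : uvIdeal ≤ bstar.comap (bind₁ psiVar) := by
  rw [uvIdeal, Ideal.span_le, Set.singleton_subset_iff, SetLike.mem_coe, Ideal.mem_comap,
    map_mul, bind₁_psiVar_uPoly, bind₁_psiVar_vPoly,
    show yv * (yv - zv) = -(yv * (zv - yv)) by ring]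
  exact bstar.neg_mem_iff.2 (Ideal.subset_span (Or.inl (by simp)))

noncomputable def theta : (MvPolynomial PVar ℤ ⧸ bstar) →ₐ[ℤ] (MvPolynomial (Fin 2) ℤ ⧸ uvIdeal) :=
  Ideal.quotientMapₐ uvIdeal (bind₁ thetaVar) bstar_le_comap_bind₁_thetaVar

noncomputable def psi : (MvPolynomial (Fin 2) ℤ ⧸ uvIdeal) →ₐ[ℤ] (MvPolynomial PVar ℤ ⧸ bstar) :=
  Ideal.quotientMapₐ bstar (bind₁ psiVar) uvIdeal_le_comap_bind₁_psiVar

lemma theta_mk (p : MvPolynomial PVar ℤ) :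
    theta (π p) = Ideal.Quotient.mk uvIdeal (bind₁ thetaVar p) := rfl

lemma psi_mk (p : MvPolynomial (Fin 2) ℤ) :
    psi (Ideal.Quotient.mk uvIdeal p) = π (bind₁ psiVar p) := rfl

lemma mk_xv_four (h : 1 ≤ 4) : π (xv 4 h) = -1 - π yv - π zv := by
  have : π (1 + zv + yv + xv 4 h) = 0 :=
    Ideal.Quotient.eq_zero_iff_mem.2 (Ideal.subset_span (Or.inl (by simp)))
  simp only [map_add, map_one] at this
  linear_combination this

lemma mk_xv_three (h : 1 ≤ 3) : π (xv 3 h) = 2 * π yv - π zv := by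
  have : π (1 + xv 4 (by norm_num) - xv 3 h + 3 * yv) = 0 :=
    Ideal.Quotient.eq_zero_iff_mem.2 (Ideal.subset_span (Or.inl (by simp)))
  simp only [map_add, map_sub, map_mul, map_one, map_ofNat, mk_xv_four] at this
  linear_combination -this

lemma mk_xv_two (h : 1 ≤ 2) : π (xv 2 h) = 2 * π yv - π zv + 1 := by
  have : π (1 + xv 3 (by norm_num) - xv 2 h) = 0 :=
    Ideal.Quotient.eq_zero_iff_mem.2 (Ideal.subset_span (Or.inl (by simp)))
  simp only [map_add, map_sub, map_one, mk_xv_three] at this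
  linear_combination -this

lemma mk_xv_one (h : 1 ≤ 1) : π (xv 1 h) = 2 * π yv - π zv + 2 := by
  have : π (1 + xv 2 (by norm_num) - xv 1 h) = 0 :=
    Ideal.Quotient.eq_zero_iff_mem.2 (Ideal.subset_span (Or.inl (by simp)))
  simp only [map_add, map_sub, map_one, mk_xv_two] at this
  linear_combination -this

lemma mk_xv_of_le_three {m : ℕ} (h : 1 ≤ m) (hm : m ≤ 3) :
    π (xv m h) = 2 * π yv - π zv + ((3 - m : ℤ) : MvPolynomial PVar ℤ ⧸ bstar) := by
  interval_cases m
  · rw [mk_xv_one]; norm_num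
  · rw [mk_xv_two]; norm_num
  · rw [mk_xv_three]; norm_num

lemma mk_xv_of_four_le {m : ℕ} (h : 1 ≤ m) (hm : 4 ≤ m) :
    π (xv m h) = π yv - π zv + 1 - ((m : MvPolynomial PVar ℤ ⧸ bstar) - 2) * (π yv + 1) := by
  induction m, hm using Nat.le_induction with
  | base => rw [mk_xv_four]; push_cast; ring
  | succ n hn ih =>
    have : π (1 + xv (n + 1) _ - xv n (by omega) + yv) = 0 :=
      Ideal.Quotient.eq_zero_iff_mem.2 (Ideal.subset_span (Or.inr ⟨n, hn, rfl⟩))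
    simp only [map_add, map_sub, map_one, ih (by omega)] at this
    push_cast
    linear_combination this

lemma theta_comp_psi : theta.comp psi = AlgHom.id ℤ _ := by
  refine Ideal.Quotient.algHom_ext _ (MvPolynomial.algHom_ext fun i => ?_)
  fin_cases i <;> simp [psi_mk, theta_mk, psiVar, uPoly, vPoly, yv, zv, thetaVar]

lemma psi_comp_theta : psi.comp theta = AlgHom.id ℤ _ := by
  refine Ideal.Quotient.algHom_ext _ (MvPolynomial.algHom_ext fun i => ?_)
  simp only [AlgHom.comp_apply, Ideal.Quotient.mkₐ_eq_mk, AlgHom.id_apply, theta_mk, psi_mk]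
  rcases i with ⟨m, h⟩ | _ | _
  · change π (bind₁ psiVar (bind₁ thetaVar (xv m h))) = π (xv m h)
    by_cases hm : m ≤ 3
    · rw [bind₁_thetaVar_xv_of_le_three h hm, mk_xv_of_le_three h hm]
      simp only [map_add, map_intCast, bind₁_psiVar_uPoly, bind₁_psiVar_vPoly, map_sub]
      ring
    · rw [bind₁_thetaVar_xv_of_four_le h (by omega), mk_xv_of_four_le h (by omega)]
      simp only [map_add, map_sub, map_mul, map_one, map_natCast, map_ofNat,
        bind₁_psiVar_uPoly, bind₁_psiVar_vPoly]
  · change π (bind₁ psiVar (bind₁ thetaVar yv)) = π yv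
    rw [bind₁_thetaVar_yv, bind₁_psiVar_uPoly]
  · change π (bind₁ psiVar (bind₁ thetaVar zv)) = π zv
    rw [bind₁_thetaVar_zv, map_sub, bind₁_psiVar_uPoly, bind₁_psiVar_vPoly, sub_sub_cancel]

/-- There is a ring isomorphism `P*/𝔟* → ℤ[u,v]/(uv)` sending `x₁ ↦ u+v+2`,
`x₂ ↦ u+v+1`, `x₃ ↦ u+v`, `x_m ↦ v+1−(m−2)(u+1)` for `m ≥ 4`, `y ↦ u`, `z ↦ u−v`. -/
theorem pstar_iso_theta :
    ∃ e : (MvPolynomial PVar ℤ ⧸ bstar) ≃+* (MvPolynomial (Fin 2) ℤ ⧸ uvIdeal),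
      e (Ideal.Quotient.mk bstar (xv 1 (by norm_num))) =
        Ideal.Quotient.mk uvIdeal (uPoly + vPoly + 2) ∧
      e (Ideal.Quotient.mk bstar (xv 2 (by norm_num))) =
        Ideal.Quotient.mk uvIdeal (uPoly + vPoly + 1) ∧
      e (Ideal.Quotient.mk bstar (xv 3 (by norm_num))) =
        Ideal.Quotient.mk uvIdeal (uPoly + vPoly) ∧
      (∀ (m : ℕ) (hm : 4 ≤ m),
        e (Ideal.Quotient.mk bstar (xv m (by omega))) =
          Ideal.Quotient.mk uvIdeal
            (vPoly + 1 - ((m : MvPolynomial (Fin 2) ℤ) - 2) * (uPoly + 1))) ∧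
      e (Ideal.Quotient.mk bstar yv) = Ideal.Quotient.mk uvIdeal uPoly ∧
      e (Ideal.Quotient.mk bstar zv) = Ideal.Quotient.mk uvIdeal (uPoly - vPoly) := by
  refine ⟨(AlgEquiv.ofAlgHom theta psi theta_comp_psi psi_comp_theta).toRingEquiv,
    ?_, ?_, ?_, fun m hm => ?_, ?_, ?_⟩ <;>
    simp only [AlgEquiv.coe_ringEquiv, AlgEquiv.ofAlgHom_apply, theta_mk]
  · rw [bind₁_thetaVar_xv_of_le_three _ (by norm_num)]; norm_num
  · rw [bind₁_thetaVar_xv_of_le_three _ (by norm_num)]; norm_num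
  · rw [bind₁_thetaVar_xv_of_le_three _ (by norm_num)]; norm_num
  · rw [bind₁_thetaVar_xv_of_four_le _ hm]
  · rw [bind₁_thetaVar_yv]
  · rw [bind₁_thetaVar_zv]
end

section
/- Let 𝔉 be a Fraïssé class, let X ∈ 𝔉, and let a and b be separated elements of X. Then [X,a] = [X∖{b},a] in Θ(𝔉). -/
/-! # Relational structures, embeddings, amalgamations, Fraïssé classes -/

namespace Paper

/-- A relational signature: a set `I` of relation symbols with arities `≥ 1`. -/
structure Signature : Type 1 where
  I : Type
  arity : I → ℕ
  arity_pos : ∀ i, 1 ≤ arity i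

variable {σ : Signature}

/-- A (finite relational) structure for the signature `σ`. -/
structure Struc (σ : Signature) : Type 1 where
  carrier : Type
  [fin : Finite carrier]
  rel : ∀ i : σ.I, (Fin (σ.arity i) → carrier) → Prop

attribute [instance] Struc.fin

/-- An embedding of structures: an injection under which the relations on the source are
exactly the restrictions of the relations on the target. -/
structure Emb (X Y : Struc σ) : Type where
  toFun : X.carrier → Y.carrier
  inj : Function.Injective toFun
  rel_iff : ∀ (i : σ.I) (v : Fin (σ.arity i) → X.carrier),
    Y.rel i (fun j => toFun (v j)) ↔ X.rel i v

/-- The identity embedding. -/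
def Emb.id (X : Struc σ) : Emb X X where
  toFun := fun x => x
  inj := fun _ _ h => h
  rel_iff := fun _ _ => Iff.rfl

/-- Composition of embeddings. -/
def Emb.comp {X Y Z : Struc σ} (g : Emb Y Z) (f : Emb X Y) : Emb X Z where
  toFun := fun x => g.toFun (f.toFun x)
  inj := fun _ _ h => f.inj (g.inj h)
  rel_iff := fun i v => (g.rel_iff i fun j => f.toFun (v j)).trans (f.rel_iff i v)

/-- An embedding is an isomorphism if it is surjective. -/
def Emb.IsIso {X Y : Struc σ} (f : Emb X Y) : Prop := Function.Surjective f.toFun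

/-- Two structures are isomorphic. -/
def StrucIso (X Y : Struc σ) : Prop := ∃ f : Emb X Y, f.IsIso

theorem strucIso_refl (X : Struc σ) : StrucIso X X := ⟨Emb.id X, fun y => ⟨y, rfl⟩⟩

/-- The induced structure on a subset of the carrier. -/
def Struc.restrict (X : Struc σ) (S : Set X.carrier) : Struc σ where
  carrier := S
  rel := fun i v => X.rel i (fun j => (v j : X.carrier))

/-- The inclusion embedding of an induced substructure into the whole structure. -/
def Struc.subEmb (X : Struc σ) (S : Set X.carrier) : Emb (X.restrict S) X where
  toFun := fun a => a.1
  inj := fun _ _ h => Subtype.ext h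
  rel_iff := fun _ _ => Iff.rfl

/-- The inclusion embedding between induced substructures on nested subsets. -/
def Struc.inclEmb (X : Struc σ) {S T : Set X.carrier} (h : S ⊆ T) :
    Emb (X.restrict S) (X.restrict T) where
  toFun := fun a => ⟨a.1, h a.2⟩
  inj := fun a b hab => Subtype.ext (Subtype.mk_eq_mk.mp (by exact hab))
  rel_iff := fun _ _ => Iff.rfl

/-- An amalgamation of `Y₁` and `Y₂` over `X` (along `i₁`, `i₂`). -/
structure Amalg {X Y₁ Y₂ : Struc σ} (i₁ : Emb X Y₁) (i₂ : Emb X Y₂) : Type 1 where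
  Z : Struc σ
  j₁ : Emb Y₁ Z
  j₂ : Emb Y₂ Z
  comm : ∀ x, j₁.toFun (i₁.toFun x) = j₂.toFun (i₂.toFun x)
  surj : ∀ z, z ∈ Set.range j₁.toFun ∪ Set.range j₂.toFun

/-- Isomorphism of amalgamations: a structure isomorphism commuting with the two
embeddings. -/
def Amalg.Iso {X Y₁ Y₂ : Struc σ} {i₁ : Emb X Y₁} {i₂ : Emb X Y₂}
    (A B : Amalg i₁ i₂) : Prop :=
  ∃ f : Emb A.Z B.Z, f.IsIso ∧ (∀ y, f.toFun (A.j₁.toFun y) = B.j₁.toFun y) ∧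
    (∀ y, f.toFun (A.j₂.toFun y) = B.j₂.toFun y)

/-- A structure lies in the class `F` up to isomorphism. -/
def MemUpIso (F : Set (Struc σ)) (X : Struc σ) : Prop := ∃ W ∈ F, StrucIso X W

theorem memUpIso_of_mem {F : Set (Struc σ)} {X : Struc σ} (h : X ∈ F) : MemUpIso F X :=
  ⟨X, h, strucIso_refl X⟩

/-- A Fraïssé class. -/
structure IsFraisse (F : Set (Struc σ)) : Prop where
  nonempty : F.Nonempty
  finClasses : ∀ n : ℕ, ∃ (m : ℕ) (r : Fin m → Struc σ),
    ∀ X ∈ F, Nat.card X.carrier = n → ∃ α, StrucIso X (r α)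
  hereditary : ∀ X ∈ F, ∀ Y : Struc σ, Nonempty (Emb Y X) → MemUpIso F Y
  amalg : ∀ (X Y₁ Y₂ : Struc σ), X ∈ F → Y₁ ∈ F → Y₂ ∈ F →
    ∀ (i₁ : Emb X Y₁) (i₂ : Emb X Y₂), ∃ A : Amalg i₁ i₂, MemUpIso F A.Z

theorem pair_compl_subset_left {α : Type*} (a b : α) : ({a, b} : Set α)ᶜ ⊆ ({a} : Set α)ᶜ :=
  Set.compl_subset_compl.mpr (fun _ hx => Set.mem_insert_iff.mpr (Or.inl hx))

theorem pair_compl_subset_right {α : Type*} (a b : α) : ({a, b} : Set α)ᶜ ⊆ ({b} : Set α)ᶜ :=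
  Set.compl_subset_compl.mpr (fun _ hx => Set.mem_insert_iff.mpr (Or.inr hx))

/-- The canonical amalgamation of `X∖{a}` and `X∖{b}` over `X∖{a,b}`, namely `X` itself. -/
def canonAmalg (X : Struc σ) (a b : X.carrier) (hab : a ≠ b) :
    Amalg (X.inclEmb (pair_compl_subset_left a b)) (X.inclEmb (pair_compl_subset_right a b)) where
  Z := X
  j₁ := X.subEmb ({a} : Set X.carrier)ᶜ
  j₂ := X.subEmb ({b} : Set X.carrier)ᶜ
  comm := fun _ => rfl
  surj := fun z => by
    by_cases hz : z = a
    · exact Or.inr ⟨⟨z, by simp only [Set.mem_compl_iff, Set.mem_singleton_iff, hz]; exact hab⟩, rfl⟩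
    · exact Or.inl ⟨⟨z, by simp [hz]⟩, rfl⟩

/-- Two distinct elements `a b` of `X` are separated (relative to the class `F`) if `X` is,
up to isomorphism of amalgamations, the unique amalgamation of `X∖{a}` and `X∖{b}` over
`X∖{a,b}` lying in `F`. -/
def Separated (F : Set (Struc σ)) (X : Struc σ) (a b : X.carrier) (hab : a ≠ b) : Prop :=
  ∀ A : Amalg (X.inclEmb (pair_compl_subset_left a b)) (X.inclEmb (pair_compl_subset_right a b)),
    MemUpIso F A.Z → A.Iso (canonAmalg X a b hab)

/-- Stably separated: every embedding into a member of `F` sends `a`, `b` to separated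
elements. -/
def StablySeparated (F : Set (Struc σ)) (X : Struc σ) (a b : X.carrier) (hab : a ≠ b) : Prop :=
  ∀ X' : Struc σ, MemUpIso F X' → ∀ f : Emb X X',
    Separated F X' (f.toFun a) (f.toFun b) (fun h => hab (f.inj h))

/-- Isomorphism of marked structures. -/
def MarkedIso (X : Struc σ) (a : X.carrier) (Y : Struc σ) (b : Y.carrier) : Prop :=
  ∃ f : Emb X Y, f.IsIso ∧ f.toFun a = b

/-- `b` is extraneous in the marked structure `(X, a)` if it is separated from `a`. -/
def Extraneous (F : Set (Struc σ)) (X : Struc σ) (a b : X.carrier) : Prop :=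
  ∃ h : a ≠ b, Separated F X a b h

/-- A marked structure is minimal if it has no extraneous elements. -/
def MinimalMarked (F : Set (Struc σ)) (X : Struc σ) (a : X.carrier) : Prop :=
  ∀ b : X.carrier, ¬ Extraneous F X a b

/-- `f : W → X` is a one-point extension missing exactly `a`. -/
def IsOnePointExt {W X : Struc σ} (f : Emb W X) (a : X.carrier) : Prop :=
  Set.range f.toFun = ({a} : Set X.carrier)ᶜ

end Paper

/-! # The ring `Θ(𝔉)` of a Fraïssé class -/

namespace Paper

variable {σ : Signature}

/-- Generators of `Θ(𝔉)`: one for each embedding between members of `𝔉`. -/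
def ThetaGen (F : Set (Struc σ)) : Type 1 :=
  Σ (X : {X : Struc σ // X ∈ F}) (Y : {Y : Struc σ // Y ∈ F}), Emb X.1 Y.1

/-- The polynomial ring on the generators of `Θ(𝔉)`. -/
abbrev ThetaPoly (F : Set (Struc σ)) := MvPolynomial (ThetaGen F) ℤ

/-- The generator `[i]` for an embedding `i : X → Y` between members of `𝔉`. -/
noncomputable def thetaVar {F : Set (Struc σ)} (X Y : Struc σ) (hX : X ∈ F) (hY : Y ∈ F)
    (f : Emb X Y) : ThetaPoly F :=
  MvPolynomial.X ⟨⟨X, hX⟩, ⟨Y, hY⟩, f⟩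

/-- The defining relations of `Θ(𝔉)`: `[i] = 1` for isomorphisms, `[j∘i] = [j]·[i]`,
and the amalgamation relations `[i] = Σ_α [i'_α]` where `i'_α` runs over a complete
irredundant system of representatives of the isomorphism classes of amalgamations
lying in `𝔉`. -/
def ThetaRels (F : Set (Struc σ)) : Set (ThetaPoly F) :=
  {p | ∃ (X Y : Struc σ) (hX : X ∈ F) (hY : Y ∈ F) (f : Emb X Y),
      f.IsIso ∧ p = thetaVar X Y hX hY f - 1} ∪
  {p | ∃ (X Y Z : Struc σ) (hX : X ∈ F) (hY : Y ∈ F) (hZ : Z ∈ F)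
      (f : Emb X Y) (g : Emb Y Z),
      p = thetaVar X Z hX hZ (g.comp f) - thetaVar Y Z hY hZ g * thetaVar X Y hX hY f} ∪
  {p | ∃ (X Y X' : Struc σ) (hX : X ∈ F) (hY : Y ∈ F) (hX' : X' ∈ F)
      (i : Emb X Y) (f : Emb X X') (m : ℕ) (r : Fin m → Amalg i f)
      (hr : ∀ α, (r α).Z ∈ F),
      (∀ A : Amalg i f, MemUpIso F A.Z → ∃ α, A.Iso (r α)) ∧
      (∀ α β, (r α).Iso (r β) → α = β) ∧
      p = thetaVar X Y hX hY i - ∑ α, thetaVar X' (r α).Z hX' (hr α) ((r α).j₂)}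

/-- The ring `Θ(𝔉)`. -/
abbrev ThetaRing (F : Set (Struc σ)) : Type 1 :=
  ThetaPoly F ⧸ Ideal.span (ThetaRels F)

/-- The class `[i] ∈ Θ(𝔉)` of an embedding between members of `𝔉`. -/
noncomputable def thetaClass {F : Set (Struc σ)} (X Y : Struc σ) (hX : X ∈ F) (hY : Y ∈ F)
    (f : Emb X Y) : ThetaRing F :=
  Ideal.Quotient.mk _ (thetaVar X Y hX hY f)

end Paper

/-!
The embedding `U → V → X` factors through `W → X` as some `e : U → W`, and the resulting square
exhibits `X` as an amalgamation of `V` and `W` over `U`. Up to the isomorphisms `W ≅ X∖{a}`,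
`V ≅ X∖{b}`, `U ≅ X∖{a,b}` this is the amalgamation of `X∖{b}` and `X∖{a}` over `X∖{a,b}`, which
separation makes the only one in `𝔉`. So the amalgamation relation of `Θ(𝔉)` for `[k]` along `e`
has the single term `[i]`.
-/

namespace Paper

variable {σ : Signature}

namespace Emb

variable {U W X : Struc σ}

noncomputable def factor (p : Emb U X) (q : Emb W X)
    (h : Set.range p.toFun ⊆ Set.range q.toFun) : Emb U W where
  toFun u := (h ⟨u, rfl⟩).choose
  inj u v huv := p.inj <| by
    rw [← (h ⟨u, rfl⟩).choose_spec, ← (h ⟨v, rfl⟩).choose_spec]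
    exact congrArg q.toFun huv
  rel_iff ι v := by
    have hspec : ∀ u, q.toFun (h ⟨u, rfl⟩).choose = p.toFun u :=
      fun u => (h ⟨u, rfl⟩).choose_spec
    rw [← q.rel_iff]
    simp only [hspec]
    exact p.rel_iff ι v

theorem factor_spec (p : Emb U X) (q : Emb W X) (h : Set.range p.toFun ⊆ Set.range q.toFun)
    (u : U.carrier) : q.toFun ((factor p q h).toFun u) = p.toFun u :=
  (h ⟨u, rfl⟩).choose_spec

theorem factor_isIso (p : Emb U X) (q : Emb W X) (h : Set.range p.toFun = Set.range q.toFun) :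
    (factor p q h.le).IsIso := by
  intro w
  obtain ⟨u, hu⟩ := h.ge ⟨w, rfl⟩
  exact ⟨u, q.inj ((factor_spec p q h.le u).trans hu)⟩

theorem IsIso.comp {g : Emb W X} {f : Emb U W} (hg : g.IsIso) (hf : f.IsIso) :
    (g.comp f).IsIso :=
  show Function.Surjective (g.toFun ∘ f.toFun) from Function.Surjective.comp hg hf

end Emb

theorem Struc.range_subEmb (X : Struc σ) (S : Set X.carrier) :
    Set.range (X.subEmb S).toFun = S :=
  Subtype.range_val

namespace IsOnePointExt

variable {W X : Struc σ} {f : Emb W X} {a : X.carrier}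

theorem mem_range_iff (h : IsOnePointExt f a) {x : X.carrier} :
    x ∈ Set.range f.toFun ↔ x ≠ a := by
  rw [h, Set.mem_compl_singleton_iff]

theorem apply_ne (h : IsOnePointExt f a) (w : W.carrier) : f.toFun w ≠ a :=
  h.mem_range_iff.mp ⟨w, rfl⟩

end IsOnePointExt

namespace Amalg

variable {X Y₁ Y₂ : Struc σ} {i₁ : Emb X Y₁} {i₂ : Emb X Y₂}

def swap (A : Amalg i₁ i₂) : Amalg i₂ i₁ where
  Z := A.Z
  j₁ := A.j₂
  j₂ := A.j₁
  comm x := (A.comm x).symm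
  surj z := (A.surj z).symm

theorem Iso.swap {A B : Amalg i₁ i₂} (h : A.Iso B) : A.swap.Iso B.swap := by
  obtain ⟨f, hf, h₁, h₂⟩ := h
  exact ⟨f, hf, h₂, h₁⟩

theorem Iso.trans {A B C : Amalg i₁ i₂} (hAB : A.Iso B) (hBC : B.Iso C) : A.Iso C := by
  obtain ⟨f, hf, hf₁, hf₂⟩ := hAB
  obtain ⟨g, hg, hg₁, hg₂⟩ := hBC
  exact ⟨g.comp f, hg.comp hf, fun y => (congrArg g.toFun (hf₁ y)).trans (hg₁ y),
    fun y => (congrArg g.toFun (hf₂ y)).trans (hg₂ y)⟩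

section Precomp

variable {X' Y₁' Y₂' : Struc σ} {i₁' : Emb X' Y₁'} {i₂' : Emb X' Y₂'}
  {φ₁ : Emb Y₁' Y₁} {φ₂ : Emb Y₂' Y₂}

def precomp (A : Amalg i₁ i₂) (hφ₁ : φ₁.IsIso) (hφ₂ : φ₂.IsIso)
    (hφ : ∀ x, ∃ y, φ₁.toFun (i₁'.toFun x) = i₁.toFun y ∧ φ₂.toFun (i₂'.toFun x) = i₂.toFun y) :
    Amalg i₁' i₂' where
  Z := A.Z
  j₁ := A.j₁.comp φ₁
  j₂ := A.j₂.comp φ₂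
  comm x := by
    obtain ⟨y, h₁, h₂⟩ := hφ x
    change A.j₁.toFun (φ₁.toFun _) = A.j₂.toFun (φ₂.toFun _)
    rw [h₁, h₂, A.comm]
  surj z := by
    rcases A.surj z with ⟨y, rfl⟩ | ⟨y, rfl⟩
    · obtain ⟨y', rfl⟩ := hφ₁ y
      exact Or.inl ⟨y', rfl⟩
    · obtain ⟨y', rfl⟩ := hφ₂ y
      exact Or.inr ⟨y', rfl⟩

theorem Iso.of_precomp {A B : Amalg i₁ i₂} (hφ₁ : φ₁.IsIso) (hφ₂ : φ₂.IsIso)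
    (hφ : ∀ x, ∃ y, φ₁.toFun (i₁'.toFun x) = i₁.toFun y ∧ φ₂.toFun (i₂'.toFun x) = i₂.toFun y)
    (h : (A.precomp hφ₁ hφ₂ hφ).Iso (B.precomp hφ₁ hφ₂ hφ)) : A.Iso B := by
  obtain ⟨f, hf, h₁, h₂⟩ := h
  refine ⟨f, hf, fun y => ?_, fun y => ?_⟩
  · obtain ⟨y', rfl⟩ := hφ₁ y
    exact h₁ y'
  · obtain ⟨y', rfl⟩ := hφ₂ y
    exact h₂ y'

end Precomp

end Amalg

theorem thetaClass_eq_of_forall_amalg_iso {F : Set (Struc σ)} {X Y X' : Struc σ}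
    (hX : X ∈ F) (hY : Y ∈ F) (hX' : X' ∈ F) {i : Emb X Y} {f : Emb X X'} (A₀ : Amalg i f)
    (hA₀ : A₀.Z ∈ F) (h : ∀ A : Amalg i f, MemUpIso F A.Z → A.Iso A₀) :
    thetaClass X Y hX hY i = thetaClass X' A₀.Z hX' hA₀ A₀.j₂ := by
  refine Ideal.Quotient.eq.mpr (Ideal.subset_span (Or.inr ?_))
  exact ⟨X, Y, X', hX, hY, hX', i, f, 1, fun _ => A₀, fun _ => hA₀, fun A hA => ⟨0, h A hA⟩,
    fun _ _ _ => Subsingleton.elim _ _, by rw [Fin.sum_univ_one]⟩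

section Separated

variable {F : Set (Struc σ)} {X W V U : Struc σ} {a b : X.carrier} {i : Emb W X} {j : Emb V X}
  {k : Emb U V} {e : Emb U W}

def Amalg.ofCover (he : ∀ u, i.toFun (e.toFun u) = j.toFun (k.toFun u))
    (hcover : ∀ x, x ∈ Set.range j.toFun ∪ Set.range i.toFun) : Amalg k e where
  Z := X
  j₁ := j
  j₂ := i
  comm u := (he u).symm
  surj := hcover

theorem Separated.amalg_iso_ofCover {hab : a ≠ b} (hsep : Separated F X a b hab)
    (hi : IsOnePointExt i a) (hj : IsOnePointExt j b) {a' : V.carrier} (ha' : j.toFun a' = a)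
    (hk : IsOnePointExt k a') (he : ∀ u, i.toFun (e.toFun u) = j.toFun (k.toFun u))
    (hcover : ∀ x, x ∈ Set.range j.toFun ∪ Set.range i.toFun)
    (A : Amalg k e) (hA : MemUpIso F A.Z) : A.Iso (Amalg.ofCover he hcover) := by
  have hWa : Set.range (X.subEmb {a}ᶜ).toFun = Set.range i.toFun :=
    (X.range_subEmb _).trans hi.symm
  have hVb : Set.range (X.subEmb {b}ᶜ).toFun = Set.range j.toFun :=
    (X.range_subEmb _).trans hj.symm
  have hφ : ∀ x, ∃ u,
      (Emb.factor _ i hWa.le).toFun ((X.inclEmb (pair_compl_subset_left a b)).toFun x) =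
        e.toFun u ∧
      (Emb.factor _ j hVb.le).toFun ((X.inclEmb (pair_compl_subset_right a b)).toFun x) =
        k.toFun u := by
    rintro ⟨x, hx⟩
    obtain ⟨v, rfl⟩ := hj.mem_range_iff.mpr fun h => hx (Or.inr h)
    obtain ⟨u, rfl⟩ := hk.mem_range_iff.mpr fun h : v = a' => hx (Or.inl (h ▸ ha'))
    refine ⟨u, i.inj ?_, j.inj ?_⟩
    · rw [Emb.factor_spec, he]
      rfl
    · rw [Emb.factor_spec]
      rfl
  have hcanon : (canonAmalg X a b hab).Iso ((Amalg.ofCover he hcover).swap.precomp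
      (Emb.factor_isIso _ _ hWa) (Emb.factor_isIso _ _ hVb) hφ) :=
    ⟨Emb.id X, fun x => ⟨x, rfl⟩, fun y => (Emb.factor_spec _ i hWa.le y).symm,
      fun y => (Emb.factor_spec _ j hVb.le y).symm⟩
  exact (((hsep (A.swap.precomp _ _ hφ) hA).trans hcanon).of_precomp _ _ _).swap

end Separated

/-- `[X,a]` is the class of a one-point extension `i : W → X` missing `a`, and `[X∖{b},a]` that
of a one-point extension `k : U → V` missing `a'`, where `j : V → X` has image `X∖{b}` and sends
`a'` to `a`. -/
theorem thetaClass_eq_of_separated_general {σ : Signature} {F : Set (Struc σ)}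
    (X : Struc σ) (hX : X ∈ F) (a b : X.carrier) (hab : a ≠ b)
    (hsep : Separated F X a b hab)
    (W : Struc σ) (hW : W ∈ F) (i : Emb W X) (hi : IsOnePointExt i a)
    (V : Struc σ) (hV : V ∈ F) (j : Emb V X)
    (hj : Set.range j.toFun = ({b} : Set X.carrier)ᶜ)
    (a' : V.carrier) (ha' : j.toFun a' = a)
    (U : Struc σ) (hU : U ∈ F) (k : Emb U V) (hk : IsOnePointExt k a') :
    thetaClass W X hW hX i = thetaClass U V hU hV k := by
  have hjk : Set.range (j.comp k).toFun ⊆ Set.range i.toFun := by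
    rintro _ ⟨u, rfl⟩
    exact hi.mem_range_iff.mpr fun h => hk.apply_ne u (j.inj (h.trans ha'.symm))
  have he := Emb.factor_spec (j.comp k) i hjk
  have hcover : ∀ x, x ∈ Set.range j.toFun ∪ Set.range i.toFun := by
    intro x
    by_cases hx : x = b
    · exact Or.inr (hi.mem_range_iff.mpr fun h => hab (h.symm.trans hx))
    · exact Or.inl ((IsOnePointExt.mem_range_iff hj).mpr hx)
  exact (thetaClass_eq_of_forall_amalg_iso hU hV hW (Amalg.ofCover he hcover) hX
    fun A hA => hsep.amalg_iso_ofCover hi hj ha' hk he hcover A hA).symm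

/-- **Proposition 2.9**: if `a` and `b` are separated elements of `X ∈ 𝔉`, then
`[X,a] = [X∖{b},a]` in `Θ(𝔉)`.  Here `[X,a]` is the class of any one-point extension
`W → X` with image `X∖{a}` (with `W ∈ 𝔉`), and `[X∖{b},a]` is the class of any one-point
extension `U → V` where `V ∈ 𝔉` embeds into `X` with image `X∖{b}`, `a' ∈ V` corresponds
to `a`, and the image of `U` is `V∖{a'}`. -/
theorem thetaClass_eq_of_separated {σ : Signature} {F : Set (Struc σ)} (hF : IsFraisse F)
    (X : Struc σ) (hX : X ∈ F) (a b : X.carrier) (hab : a ≠ b)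
    (hsep : Separated F X a b hab)
    (W : Struc σ) (hW : W ∈ F) (i : Emb W X) (hi : IsOnePointExt i a)
    (V : Struc σ) (hV : V ∈ F) (j : Emb V X)
    (hj : Set.range j.toFun = ({b} : Set X.carrier)ᶜ)
    (a' : V.carrier) (ha' : j.toFun a' = a)
    (U : Struc σ) (hU : U ∈ F) (k : Emb U V) (hk : IsOnePointExt k a') :
    thetaClass W X hW hX i = thetaClass U V hU hV k :=
  thetaClass_eq_of_separated_general X hX a b hab hsep W hW i hi V hV j hj a' ha' U hU k hk

end Paper
end

section
/- Let 𝔉 be a Fraïssé class, let ((X,a),(Y,b),i) be an L-datum, and let c be an element of X∖{a} that is stably separated from a in X. Then L((X,a),(Y,b),i) is congruent to L((X∖{c},a),(Y∖{i(c)},b),i') modulo 𝔟₀, where i' is the restriction of i to X∖{a,c}. -/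
/-! # The polynomial ring `P` on marked structures, L-data and Q-data -/

namespace Paper

open scoped Classical

variable {σ : Signature}

theorem memUpIso_restrict {F : Set (Struc σ)} (hF : IsFraisse F) {X : Struc σ}
    (hX : MemUpIso F X) (S : Set X.carrier) : MemUpIso F (X.restrict S) := by
  obtain ⟨W, hW, f, hf⟩ := hX
  exact hF.hereditary W hW _ ⟨f.comp (X.subEmb S)⟩

/-- Marked structures whose underlying structure lies in `F` (up to isomorphism). -/
def MarkedIn (F : Set (Struc σ)) : Type 1 :=
  Σ X : {X : Struc σ // MemUpIso F X}, X.1.carrier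

/-- Isomorphism of marked structures, as a relation on `MarkedIn F`. -/
def markedInRel (F : Set (Struc σ)) (p q : MarkedIn F) : Prop :=
  MarkedIso p.1.1 p.2 q.1.1 q.2

/-- Isomorphism classes of marked structures in `F`. -/
def MarkedCls (F : Set (Struc σ)) : Type 1 := Quot (markedInRel F)

/-- The polynomial ring `P` over `ℤ` with one variable for each isomorphism class of
marked structures in `F`. -/
abbrev PRing (F : Set (Struc σ)) : Type 1 := MvPolynomial (MarkedCls F) ℤ

/-- The variable `⟦X,a⟧` of `P`. -/
noncomputable def mVar {F : Set (Struc σ)} (X : Struc σ) (hX : MemUpIso F X)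
    (a : X.carrier) : PRing F :=
  MvPolynomial.X (Quot.mk _ ⟨⟨X, hX⟩, a⟩)

/-- For an L-datum `((X,a),(Y,b),i)`: the isomorphism `i : X∖{a} → Y∖{b}` extends to an
isomorphism `X → Y`. -/
def LExtends {X Y : Struc σ} {a : X.carrier} {b : Y.carrier}
    (i : Emb (X.restrict ({a} : Set X.carrier)ᶜ) (Y.restrict ({b} : Set Y.carrier)ᶜ)) :
    Prop :=
  ∃ g : Emb X Y, g.IsIso ∧
    ∀ w : (X.restrict ({a} : Set X.carrier)ᶜ).carrier, g.toFun w.1 = (i.toFun w).1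

/-- `p` is the element `L((X,a),(Y,b),i) = ⟦X,a⟧ − δ − Σ_α ⟦X_α,a⟧` of `P` associated to
the L-datum `((X,a),(Y,b),i)`, computed with respect to some complete irredundant system
of representatives `X_α` of the isomorphism classes of amalgamations of `X` and `Y` over
`X∖{a} ≅ Y∖{b}` lying in `F` in which `a` and `b` remain distinct. -/
def IsLElt (F : Set (Struc σ)) {X Y : Struc σ} (hX : MemUpIso F X) (hY : MemUpIso F Y)
    (a : X.carrier) (b : Y.carrier)
    (i : Emb (X.restrict ({a} : Set X.carrier)ᶜ) (Y.restrict ({b} : Set Y.carrier)ᶜ))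
    (p : PRing F) : Prop :=
  ∃ (m : ℕ)
    (r : Fin m → Amalg (X.subEmb ({a} : Set X.carrier)ᶜ)
      ((Y.subEmb ({b} : Set Y.carrier)ᶜ).comp i))
    (hr : ∀ α, MemUpIso F (r α).Z),
    (∀ α, (r α).j₁.toFun a ≠ (r α).j₂.toFun b) ∧
    (∀ A : Amalg (X.subEmb ({a} : Set X.carrier)ᶜ)
        ((Y.subEmb ({b} : Set Y.carrier)ᶜ).comp i),
      MemUpIso F A.Z → A.j₁.toFun a ≠ A.j₂.toFun b → ∃ α, A.Iso (r α)) ∧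
    (∀ α β, (r α).Iso (r β) → α = β) ∧
    p = mVar X hX a - (if LExtends i then 1 else 0) -
      ∑ α, mVar (r α).Z (hr α) ((r α).j₁.toFun a)

/-- The element `Q(X,a,b) = ⟦X,a⟧·⟦X∖{a},b⟧ − ⟦X,b⟧·⟦X∖{b},a⟧` of `P` associated to a
Q-datum `(X,a,b)`. -/
noncomputable def qElt {F : Set (Struc σ)} (X : Struc σ) (hX : MemUpIso F X)
    (a b : X.carrier) (hab : a ≠ b)
    (ha : MemUpIso F (X.restrict ({a} : Set X.carrier)ᶜ))
    (hb : MemUpIso F (X.restrict ({b} : Set X.carrier)ᶜ)) : PRing F :=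
  mVar X hX a * mVar _ ha ⟨b, Set.mem_compl_singleton_iff.mpr (Ne.symm hab)⟩ -
    mVar X hX b * mVar _ hb ⟨a, Set.mem_compl_singleton_iff.mpr hab⟩

/-- The generators of the ideal `𝔟₀`: the differences `⟦X,a⟧ − ⟦X∖{b},a⟧` over all marked
structures `(X,a)` with an extraneous element `b`. -/
def B0Set (F : Set (Struc σ)) : Set (PRing F) :=
  {p | ∃ (X : Struc σ) (hX : MemUpIso F X) (a b : X.carrier) (h : a ≠ b),
    Separated F X a b h ∧
    ∃ h' : MemUpIso F (X.restrict ({b} : Set X.carrier)ᶜ),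
      p = mVar X hX a -
        mVar (X.restrict ({b} : Set X.carrier)ᶜ) h'
          ⟨a, Set.mem_compl_singleton_iff.mpr h⟩}

/-- The generators of the ideal `𝔟₁`: the elements `L(D)` over all L-data `D`. -/
def LSet (F : Set (Struc σ)) : Set (PRing F) :=
  {p | ∃ (X Y : Struc σ) (hX : MemUpIso F X) (hY : MemUpIso F Y)
    (a : X.carrier) (b : Y.carrier)
    (i : Emb (X.restrict ({a} : Set X.carrier)ᶜ) (Y.restrict ({b} : Set Y.carrier)ᶜ)),
    i.IsIso ∧ IsLElt F hX hY a b i p}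

/-- The generators of the ideal `𝔟₂`: the elements `Q(D)` over all Q-data `D`. -/
def QSet (F : Set (Struc σ)) : Set (PRing F) :=
  {p | ∃ (X : Struc σ) (hX : MemUpIso F X) (a b : X.carrier) (hab : a ≠ b)
    (ha : MemUpIso F (X.restrict ({a} : Set X.carrier)ᶜ))
    (hb : MemUpIso F (X.restrict ({b} : Set X.carrier)ᶜ)),
    X ∈ F ∧ p = qElt X hX a b hab ha hb}

end Paper

namespace Paper

/-!
Let `D` send an amalgamation `A` of `X` and `Y` over `X∖{a} ≅ Y∖{b}` in which `a ≠ b` to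
`A∖{c}`, an amalgamation of `X∖{c}` and `Y∖{i(c)}`. As `c` is stably separated from `a`,
`⟦A,a⟧ - ⟦A∖{c},a⟧` and `⟦X,a⟧ - ⟦X∖{c},a⟧` are generators of `𝔟₀`, so it suffices to see that
`D` is a bijection on isomorphism classes and that `i` extends to an isomorphism iff `i'` does.
All of this comes from one gluing principle: embeddings of `Z∖{a}` and `Z∖{c}` agreeing on
`Z∖{a,c}` glue to an embedding of `Z` when `a` and `c` are separated in `Z`. It lifts an
isomorphism `A∖{c} ≅ B∖{c}` to `A ≅ B` (sending `A∖{a}`, a copy of `Y`, to the copy in `B`),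
and it puts `c` back into an amalgamation `B'` of `X∖{c}` and `Y∖{i(c)}`, inside an amalgamation
of `B'` and `Y` over `Y∖{i(c)}`.
-/

variable {σ : Signature}

noncomputable def Emb.inv {X Y : Struc σ} (f : Emb X Y) (hf : f.IsIso) : Emb Y X where
  toFun := (Equiv.ofBijective f.toFun ⟨f.inj, hf⟩).symm
  inj := (Equiv.ofBijective f.toFun ⟨f.inj, hf⟩).symm.injective
  rel_iff i v := by
    rw [← f.rel_iff]
    exact Iff.of_eq (congrArg _ (funext fun j => Equiv.ofBijective_apply_symm_apply _ _ _))

theorem Emb.inv_apply_eq {X Y : Struc σ} {f : Emb X Y} (hf : f.IsIso) {x : X.carrier}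
    {y : Y.carrier} (h : f.toFun x = y) : (f.inv hf).toFun y = x :=
  (Equiv.ofBijective f.toFun ⟨f.inj, hf⟩).symm_apply_eq.mpr h.symm

theorem Emb.inv_isIso {X Y : Struc σ} {f : Emb X Y} (hf : f.IsIso) : (f.inv hf).IsIso :=
  fun x => ⟨f.toFun x, Emb.inv_apply_eq hf rfl⟩

def Emb.codRestrict {X W : Struc σ} (f : Emb X W) (S : Set W.carrier) (h : ∀ x, f.toFun x ∈ S) :
    Emb X (W.restrict S) where
  toFun x := ⟨f.toFun x, h x⟩
  inj _ _ hxy := f.inj (congrArg Subtype.val hxy)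
  rel_iff := f.rel_iff

theorem mVar_congr {F : Set (Struc σ)} {X Y : Struc σ} (hX : MemUpIso F X)
    (hY : MemUpIso F Y) {a : X.carrier} {b : Y.carrier} (h : MarkedIso X a Y b) :
    mVar X hX a = mVar Y hY b :=
  congrArg MvPolynomial.X (Quot.sound h)

abbrev Struc.erase (X : Struc σ) (a : X.carrier) : Struc σ := X.restrict ({a} : Set X.carrier)ᶜ

section Amalgamation

variable {X Y₁ Y₂ : Struc σ} {i₁ : Emb X Y₁} {i₂ : Emb X Y₂}

theorem Amalg.iso_equivalence : Equivalence (@Amalg.Iso σ X Y₁ Y₂ i₁ i₂) where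
  refl _ := ⟨Emb.id _, fun z => ⟨z, rfl⟩, fun _ => rfl, fun _ => rfl⟩
  symm := fun ⟨f, hf, h₁, h₂⟩ =>
    ⟨f.inv hf, Emb.inv_isIso hf, fun y => Emb.inv_apply_eq hf (h₁ y),
      fun y => Emb.inv_apply_eq hf (h₂ y)⟩
  trans := fun ⟨f, hf, h₁, h₂⟩ ⟨g, hg, k₁, k₂⟩ =>
    ⟨g.comp f, hg.comp hf, fun y => (congrArg g.toFun (h₁ y)).trans (k₁ y),
      fun y => (congrArg g.toFun (h₂ y)).trans (k₂ y)⟩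

def Amalg.image {W : Struc σ} (f₁ : Emb Y₁ W) (f₂ : Emb Y₂ W)
    (h : ∀ x, f₁.toFun (i₁.toFun x) = f₂.toFun (i₂.toFun x)) : Amalg i₁ i₂ where
  Z := W.restrict (Set.range f₁.toFun ∪ Set.range f₂.toFun)
  j₁ := f₁.codRestrict _ fun y => Or.inl ⟨y, rfl⟩
  j₂ := f₂.codRestrict _ fun y => Or.inr ⟨y, rfl⟩
  comm x := Subtype.ext (h x)
  surj := by
    rintro ⟨z, ⟨y, rfl⟩ | ⟨y, rfl⟩⟩
    exacts [Or.inl ⟨y, rfl⟩, Or.inr ⟨y, rfl⟩]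

theorem exists_amalg_memUpIso {F : Set (Struc σ)} (hF : IsFraisse F) (hX : MemUpIso F X)
    (h₁ : MemUpIso F Y₁) (h₂ : MemUpIso F Y₂) (i₁ : Emb X Y₁) (i₂ : Emb X Y₂) :
    ∃ A : Amalg i₁ i₂, MemUpIso F A.Z := by
  obtain ⟨X₀, hX₀, φ, hφ⟩ := hX
  obtain ⟨W₁, hW₁, ψ₁, -⟩ := h₁
  obtain ⟨W₂, hW₂, ψ₂, -⟩ := h₂
  obtain ⟨B, hB⟩ := hF.amalg X₀ W₁ W₂ hX₀ hW₁ hW₂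
    (ψ₁.comp (i₁.comp (φ.inv hφ))) (ψ₂.comp (i₂.comp (φ.inv hφ)))
  refine ⟨Amalg.image (B.j₁.comp ψ₁) (B.j₂.comp ψ₂) fun x => ?_, memUpIso_restrict hF hB _⟩
  have h : B.j₁.toFun (ψ₁.toFun (i₁.toFun ((φ.inv hφ).toFun (φ.toFun x)))) =
      B.j₂.toFun (ψ₂.toFun (i₂.toFun ((φ.inv hφ).toFun (φ.toFun x)))) := B.comm (φ.toFun x)
  rwa [Emb.inv_apply_eq hφ rfl] at h

end Amalgamation

theorem Separated.exists_glue {F : Set (Struc σ)} (hF : IsFraisse F) {X : Struc σ}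
    {a c : X.carrier} {hac : a ≠ c} (hsep : Separated F X a c hac) {W : Struc σ}
    (hW : MemUpIso F W) (g : Emb (X.erase a) W) (h : Emb (X.erase c) W)
    (hgh : ∀ x (hxa : x ≠ a) (hxc : x ≠ c), g.toFun ⟨x, hxa⟩ = h.toFun ⟨x, hxc⟩) :
    ∃ Ψ : Emb X W, (∀ x (hxa : x ≠ a), Ψ.toFun x = g.toFun ⟨x, hxa⟩) ∧
      ∀ x (hxc : x ≠ c), Ψ.toFun x = h.toFun ⟨x, hxc⟩ := by
  obtain ⟨f, hf, h₁, h₂⟩ := hsep (Amalg.image g h fun x => hgh x.1 _ _)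
    (memUpIso_restrict hF hW _)
  exact ⟨(W.subEmb _).comp (f.inv hf),
    fun x hxa => congrArg Subtype.val (Emb.inv_apply_eq hf (h₁ ⟨x, hxa⟩)),
    fun x hxc => congrArg Subtype.val (Emb.inv_apply_eq hf (h₂ ⟨x, hxc⟩))⟩

abbrev LAmalg {X Y : Struc σ} {a : X.carrier} {b : Y.carrier}
    (i : Emb (X.erase a) (Y.erase b)) : Type 1 :=
  Amalg (X.subEmb ({a} : Set X.carrier)ᶜ) ((Y.subEmb ({b} : Set Y.carrier)ᶜ).comp i)

section LAmalg

variable {X Y : Struc σ} {a : X.carrier} {b : Y.carrier} {i : Emb (X.erase a) (Y.erase b)}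

theorem LAmalg.j₂_eq_j₁ (A : LAmalg i) {x : X.carrier} {hx : x ≠ a} {y : Y.carrier}
    (hy : y = (i.toFun ⟨x, hx⟩).1) : A.j₂.toFun y = A.j₁.toFun x := by
  subst hy
  exact (A.comm ⟨x, hx⟩).symm

theorem LAmalg.range_j₂ (hiso : i.IsIso) (A : LAmalg i) (hne : A.j₁.toFun a ≠ A.j₂.toFun b) :
    Set.range A.j₂.toFun = {A.j₁.toFun a}ᶜ := by
  ext z
  constructor
  · rintro ⟨y, rfl⟩ (hy : A.j₂.toFun y = A.j₁.toFun a)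
    by_cases hyb : y = b
    · subst hyb
      exact hne hy.symm
    · obtain ⟨x, hx⟩ := hiso ⟨y, hyb⟩
      exact x.2 (A.j₁.inj ((A.comm x).trans ((congrArg (A.j₂.toFun ∘ Subtype.val) hx).trans hy)))
  · intro hz
    rcases A.surj z with ⟨x, rfl⟩ | hy
    · exact ⟨_, A.j₂_eq_j₁ (hx := fun h => hz (congrArg A.j₁.toFun h)) rfl⟩
    · exact hy

/-- When `a` and `b` stay distinct, `Z∖{a}` is a copy of `Y`. -/
theorem LAmalg.exists_emb_erase (hiso : i.IsIso) (A : LAmalg i)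
    (hne : A.j₁.toFun a ≠ A.j₂.toFun b) {W : Struc σ} (e : Emb Y W) :
    ∃ g : Emb (A.Z.erase (A.j₁.toFun a)) W,
      ∀ y (hy : A.j₂.toFun y ≠ A.j₁.toFun a), g.toFun ⟨A.j₂.toFun y, hy⟩ = e.toFun y := by
  have hrange := A.range_j₂ hiso hne
  let j := A.j₂.codRestrict _ fun y => hrange.subset ⟨y, rfl⟩
  have hj : j.IsIso := by
    rintro ⟨z, hz⟩
    obtain ⟨y, rfl⟩ := hrange.symm.subset hz
    exact ⟨y, rfl⟩
  exact ⟨e.comp (j.inv hj), fun y _ => congrArg e.toFun (Emb.inv_apply_eq hj rfl)⟩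

end LAmalg

section Restriction

variable {X Y : Struc σ} {a c : X.carrier} {b d : Y.carrier} {hac : a ≠ c} {hbd : b ≠ d}

structure IsRestriction (i : Emb (X.erase a) (Y.erase b))
    (i' : Emb ((X.erase c).erase ⟨a, hac⟩) ((Y.erase d).erase ⟨b, hbd⟩)) : Prop where
  image_eq : d = (i.toFun ⟨c, hac.symm⟩).1
  apply_eq : ∀ w, (i'.toFun w).1.1 = (i.toFun ⟨w.1.1, fun h => w.2 (Subtype.ext h)⟩).1

variable {i : Emb (X.erase a) (Y.erase b)}
  {i' : Emb ((X.erase c).erase ⟨a, hac⟩) ((Y.erase d).erase ⟨b, hbd⟩)}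

def derivedAmalg (hi' : IsRestriction i i') (A : LAmalg i) : LAmalg i' where
  Z := A.Z.erase (A.j₁.toFun c)
  j₁ := (A.j₁.comp (X.subEmb _)).codRestrict _ fun x hx => x.2 (A.j₁.inj hx)
  j₂ := (A.j₂.comp (Y.subEmb _)).codRestrict _ fun y hy =>
    y.2 (A.j₂.inj (hy.trans (A.j₂_eq_j₁ hi'.image_eq).symm))
  comm w := Subtype.ext <| (A.comm _).trans (congrArg A.j₂.toFun (hi'.apply_eq w).symm)
  surj := by
    rintro ⟨z, hz⟩
    rcases A.surj z with ⟨x, rfl⟩ | ⟨y, rfl⟩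
    · exact Or.inl ⟨⟨x, fun h => hz (congrArg A.j₁.toFun h)⟩, rfl⟩
    · refine Or.inr ⟨⟨y, fun h => hz ?_⟩, rfl⟩
      subst h
      exact A.j₂_eq_j₁ hi'.image_eq

theorem IsRestriction.iso_derivedAmalg_of_emb (hi' : IsRestriction i i') (A : LAmalg i)
    (B' : LAmalg i') (ι : Emb B'.Z A.Z) (h₁ : ∀ x, ι.toFun (B'.j₁.toFun x) = A.j₁.toFun x.1)
    (h₂ : ∀ y, ι.toFun (B'.j₂.toFun y) = A.j₂.toFun y.1) :
    B'.Iso (derivedAmalg hi' A) := by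
  have hcA : A.j₂.toFun d = A.j₁.toFun c := A.j₂_eq_j₁ hi'.image_eq
  have hι : ∀ u, ι.toFun u ∈ ({A.j₁.toFun c} : Set A.Z.carrier)ᶜ := by
    intro u
    rcases B'.surj u with ⟨x, rfl⟩ | ⟨y, rfl⟩
    · rw [h₁]
      exact fun h => x.2 (A.j₁.inj h)
    · rw [h₂, ← hcA]
      exact fun h => y.2 (A.j₂.inj h)
  refine ⟨ι.codRestrict _ hι, ?_, fun x => Subtype.ext (h₁ x), fun y => Subtype.ext (h₂ y)⟩
  rintro ⟨z, hz⟩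
  rcases A.surj z with ⟨x, rfl⟩ | ⟨y, rfl⟩
  · exact ⟨B'.j₁.toFun ⟨x, fun h => hz (congrArg A.j₁.toFun h)⟩, Subtype.ext (h₁ _)⟩
  · refine ⟨B'.j₂.toFun ⟨y, fun h => hz ?_⟩, Subtype.ext (h₂ _)⟩
    subst h
    exact hcA

theorem Amalg.Iso.derived (hi' : IsRestriction i i') {A B : LAmalg i} (h : A.Iso B) :
    (derivedAmalg hi' A).Iso (derivedAmalg hi' B) := by
  obtain ⟨f, -, h₁, h₂⟩ := h
  exact hi'.iso_derivedAmalg_of_emb B _ (f.comp (A.Z.subEmb _)) (fun x => h₁ x.1)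
    (fun y => h₂ y.1)

theorem Amalg.Iso.of_derived {F : Set (Struc σ)} (hF : IsFraisse F) (hi' : IsRestriction i i')
    (hiso : i.IsIso) {A B : LAmalg i} (hB : MemUpIso F B.Z) (hne : A.j₁.toFun a ≠ A.j₂.toFun b)
    (hsep : Separated F A.Z (A.j₁.toFun a) (A.j₁.toFun c) fun h => hac (A.j₁.inj h))
    (h : (derivedAmalg hi' A).Iso (derivedAmalg hi' B)) : A.Iso B := by
  obtain ⟨φ, hφ, hφ₁, hφ₂⟩ := h
  have hcA : A.j₂.toFun d = A.j₁.toFun c := A.j₂_eq_j₁ hi'.image_eq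
  have hcB : B.j₂.toFun d = B.j₁.toFun c := B.j₂_eq_j₁ hi'.image_eq
  obtain ⟨g, hg⟩ := A.exists_emb_erase hiso hne B.j₂
  -- `Z∖{a}` is mapped through `Y`, `Z∖{c}` through the given isomorphism `φ`
  have hagree : ∀ z (hza : z ≠ A.j₁.toFun a) (hzc : z ≠ A.j₁.toFun c),
      g.toFun ⟨z, hza⟩ = ((B.Z.subEmb _).comp φ).toFun ⟨z, hzc⟩ := by
    intro z hza hzc
    obtain ⟨y, rfl⟩ := (A.range_j₂ hiso hne).symm.subset hza
    have hyd : y ≠ d := fun h => hzc (by rw [h]; exact hcA)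
    exact (hg y hza).trans (congrArg Subtype.val (hφ₂ ⟨y, hyd⟩)).symm
  obtain ⟨Ψ, hΨa, hΨc⟩ := hsep.exists_glue hF hB g _ hagree
  have hΨ_c : Ψ.toFun (A.j₁.toFun c) = B.j₁.toFun c := by
    have hda : A.j₂.toFun d ≠ A.j₁.toFun a := by
      rw [hcA]
      exact fun h => hac (A.j₁.inj h).symm
    rw [← hcA, hΨa _ hda]
    exact (hg d hda).trans hcB
  refine ⟨Ψ, fun w => ?_, fun x => ?_, fun y => ?_⟩
  · by_cases hw : w = B.j₁.toFun c
    · exact ⟨_, hΨ_c.trans hw.symm⟩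
    · obtain ⟨u, hu⟩ := hφ ⟨w, hw⟩
      exact ⟨u.1, (hΨc _ u.2).trans (congrArg Subtype.val hu)⟩
  · by_cases hxc : x = c
    · rw [hxc]
      exact hΨ_c
    · exact (hΨc _ fun h => hxc (A.j₁.inj h)).trans (congrArg Subtype.val (hφ₁ ⟨x, hxc⟩))
  · exact (hΨa _ ((A.range_j₂ hiso hne).subset ⟨y, rfl⟩)).trans (hg _ _)

theorem IsRestriction.exists_iso_derivedAmalg {F : Set (Struc σ)} (hF : IsFraisse F)
    (hi' : IsRestriction i i') (hsep : Separated F X a c hac) (hY : MemUpIso F Y)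
    (B' : LAmalg i') (hB' : MemUpIso F B'.Z)
    (hne' : B'.j₁.toFun ⟨a, hac⟩ ≠ B'.j₂.toFun ⟨b, hbd⟩) :
    ∃ A : LAmalg i, (MemUpIso F A.Z ∧ A.j₁.toFun a ≠ A.j₂.toFun b) ∧
      B'.Iso (derivedAmalg hi' A) := by
  -- put the missing point `d` back by amalgamating `Y` with `B'.Z` over `Y∖{d}`
  obtain ⟨A₀, hA₀⟩ := exists_amalg_memUpIso hF (memUpIso_restrict hF hY _) hY hB'
    (Y.subEmb ({d} : Set Y.carrier)ᶜ) B'.j₂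
  have hagree : ∀ x (hxa : x ≠ a) (hxc : x ≠ c),
      (A₀.j₁.comp ((Y.subEmb _).comp i)).toFun ⟨x, hxa⟩ =
        (A₀.j₂.comp B'.j₁).toFun ⟨x, hxc⟩ := by
    intro x hxa hxc
    let w : ((X.erase c).erase ⟨a, hac⟩).carrier :=
      ⟨⟨x, hxc⟩, fun h => hxa (congrArg Subtype.val h)⟩
    calc A₀.j₁.toFun (i.toFun ⟨x, hxa⟩).1 = A₀.j₁.toFun (i'.toFun w).1.1 :=
          congrArg _ (hi'.apply_eq w).symm
      _ = A₀.j₂.toFun (B'.j₂.toFun (i'.toFun w).1) := A₀.comm _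
      _ = A₀.j₂.toFun (B'.j₁.toFun w.1) := congrArg _ (B'.comm w).symm
  obtain ⟨Ψ, hΨa, hΨc⟩ := hsep.exists_glue hF hA₀ _ _ hagree
  let A : LAmalg i :=
    { Z := A₀.Z, j₁ := Ψ, j₂ := A₀.j₁, comm := fun x => hΨa x.1 x.2
      surj := fun z => by
        rcases A₀.surj z with hz | ⟨u, rfl⟩
        · exact Or.inr hz
        · rcases B'.surj u with ⟨x, rfl⟩ | ⟨y, rfl⟩
          · exact Or.inl ⟨x.1, hΨc x.1 x.2⟩
          · exact Or.inr ⟨y.1, A₀.comm y⟩ }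
  refine ⟨A, ⟨hA₀, fun h => hne' (A₀.j₂.inj ?_)⟩, hi'.iso_derivedAmalg_of_emb A B' A₀.j₂
    (fun x => (hΨc x.1 x.2).symm) (fun y => (A₀.comm y).symm)⟩
  exact (hΨc a hac).symm.trans (h.trans (A₀.comm ⟨b, hbd⟩))

theorem LExtends.restrict (hi' : IsRestriction i i') (h : LExtends i) : LExtends i' := by
  obtain ⟨g, hg, hgi⟩ := h
  have hgc : g.toFun c = d := (hgi ⟨c, hac.symm⟩).trans hi'.image_eq.symm
  refine ⟨(g.comp (X.subEmb _)).codRestrict _ fun x h => x.2 (g.inj (h.trans hgc.symm)), ?_,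
    fun w => Subtype.ext ((hgi _).trans (hi'.apply_eq w).symm)⟩
  rintro ⟨y, hy⟩
  obtain ⟨x, rfl⟩ := hg y
  exact ⟨⟨x, fun h => hy (show g.toFun x = d by rw [h]; exact hgc)⟩, rfl⟩

theorem LExtends.of_restrict {F : Set (Struc σ)} (hF : IsFraisse F)
    (hi' : IsRestriction i i') (hiso : i.IsIso) (hsep : Separated F X a c hac)
    (hY : MemUpIso F Y) (h : LExtends i') : LExtends i := by
  obtain ⟨g', hg', hgi'⟩ := h
  have hga : g'.toFun ⟨a, hac⟩ = ⟨b, hbd⟩ := by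
    obtain ⟨u, hu⟩ := hg' ⟨b, hbd⟩
    by_cases hua : u = ⟨a, hac⟩
    · rwa [← hua]
    · exact absurd ((hgi' ⟨u, hua⟩).symm.trans hu) (i'.toFun ⟨u, hua⟩).2
  have hagree : ∀ x (hxa : x ≠ a) (hxc : x ≠ c),
      ((Y.subEmb _).comp i).toFun ⟨x, hxa⟩ = ((Y.subEmb _).comp g').toFun ⟨x, hxc⟩ := by
    intro x hxa hxc
    let w : ((X.erase c).erase ⟨a, hac⟩).carrier :=
      ⟨⟨x, hxc⟩, fun h => hxa (congrArg Subtype.val h)⟩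
    exact (hi'.apply_eq w).symm.trans (congrArg Subtype.val (hgi' w)).symm
  obtain ⟨Ψ, hΨa, hΨc⟩ := hsep.exists_glue hF hY _ _ hagree
  refine ⟨Ψ, fun y => ?_, fun w => hΨa w.1 w.2⟩
  by_cases hyb : y = b
  · exact ⟨a, ((hΨc a hac).trans (congrArg Subtype.val hga)).trans hyb.symm⟩
  · obtain ⟨x, hx⟩ := hiso ⟨y, hyb⟩
    exact ⟨x.1, (hΨa x.1 x.2).trans (congrArg Subtype.val hx)⟩

theorem IsRestriction.lExtends_iff {F : Set (Struc σ)} (hF : IsFraisse F)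
    (hi' : IsRestriction i i') (hiso : i.IsIso) (hsep : Separated F X a c hac)
    (hY : MemUpIso F Y) : LExtends i ↔ LExtends i' :=
  ⟨fun h => h.restrict hi', fun h => h.of_restrict hF hi' hiso hsep hY⟩

end Restriction

theorem exists_bijective_of_reps {α β ι κ : Type*} {P : α → Prop} {Q : β → Prop}
    {R : α → α → Prop} {S : β → β → Prop} (hS : Equivalence S) {r : ι → α} {r' : κ → β}
    (hr' : ∀ l, Q (r' l)) (hcompl : ∀ x, P x → ∃ k, R x (r k))
    (hirr : ∀ k₁ k₂, R (r k₁) (r k₂) → k₁ = k₂) (hcompl' : ∀ y, Q y → ∃ l, S y (r' l))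
    (hirr' : ∀ l₁ l₂, S (r' l₁) (r' l₂) → l₁ = l₂) (D : α → β) (hD : ∀ k, Q (D (r k)))
    (hresp : ∀ x k, R x (r k) → S (D x) (D (r k)))
    (hrefl : ∀ k₁ k₂, S (D (r k₁)) (D (r k₂)) → R (r k₁) (r k₂))
    (hsurj : ∀ y, Q y → ∃ x, P x ∧ S y (D x)) :
    ∃ π : ι → κ, π.Bijective ∧ ∀ k, S (D (r k)) (r' (π k)) := by
  choose π hπ using fun k => hcompl' _ (hD k)
  refine ⟨π, ⟨fun k₁ k₂ hk => hirr _ _ (hrefl _ _ ?_), fun l => ?_⟩, hπ⟩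
  · exact hS.trans (hπ k₁) (hS.symm (hk ▸ hπ k₂))
  · obtain ⟨x, hx, hlx⟩ := hsurj _ (hr' l)
    obtain ⟨k, hk⟩ := hcompl x hx
    exact ⟨k, hirr' _ _ <| hS.trans (hS.symm (hπ k)) <|
      hS.trans (hS.symm (hresp x k hk)) (hS.symm hlx)⟩

theorem mVar_sub_mVar_erase_mem_span_B0Set {F : Set (Struc σ)} (hF : IsFraisse F)
    {Z : Struc σ} (hZ : MemUpIso F Z) {x z : Z.carrier} {hxz : x ≠ z}
    (hsep : Separated F Z x z hxz) :
    mVar Z hZ x - mVar (Z.erase z) (memUpIso_restrict hF hZ _) ⟨x, hxz⟩ ∈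
      Ideal.span (B0Set F) :=
  Ideal.subset_span ⟨Z, hZ, x, z, hxz, hsep, _, rfl⟩

/-- **Proposition 2.12**: if `c` is stably separated from the marked point `a` of the
L-datum `((X,a),(Y,b),i)`, then `L((X,a),(Y,b),i)` is congruent, modulo `𝔟₀`, to
`L((X∖{c},a),(Y∖{i(c)},b),i')`, where `i'` is the restriction of `i`. -/
theorem L_congruent_of_stablySeparated {σ : Signature} {F : Set (Struc σ)}
    (hF : IsFraisse F) (X Y : Struc σ) (hX : MemUpIso F X) (hY : MemUpIso F Y)
    (a : X.carrier) (b : Y.carrier)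
    (i : Emb (X.restrict ({a} : Set X.carrier)ᶜ) (Y.restrict ({b} : Set Y.carrier)ᶜ))
    (hiso : i.IsIso)
    (c : X.carrier) (hac : a ≠ c)
    (hstab : StablySeparated F X a c hac)
    (d : Y.carrier)
    (hd : d = (i.toFun ⟨c, Set.mem_compl_singleton_iff.mpr (Ne.symm hac)⟩).1)
    (hbd : b ≠ d)
    (i' : Emb
      ((X.restrict ({c} : Set X.carrier)ᶜ).restrict
        ({⟨a, Set.mem_compl_singleton_iff.mpr hac⟩} :
          Set (X.restrict ({c} : Set X.carrier)ᶜ).carrier)ᶜ)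
      ((Y.restrict ({d} : Set Y.carrier)ᶜ).restrict
        ({⟨b, Set.mem_compl_singleton_iff.mpr hbd⟩} :
          Set (Y.restrict ({d} : Set Y.carrier)ᶜ).carrier)ᶜ))
    (hcompat : ∀ w, ((i'.toFun w).1.1 : Y.carrier) =
      (i.toFun ⟨w.1.1, Set.mem_compl_singleton_iff.mpr
        (fun h => Set.mem_compl_singleton_iff.mp w.2 (Subtype.ext h))⟩).1)
    (p p' : PRing F)
    (hp : IsLElt F hX hY a b i p)
    (hp' : IsLElt F (memUpIso_restrict hF hX ({c} : Set X.carrier)ᶜ)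
      (memUpIso_restrict hF hY ({d} : Set Y.carrier)ᶜ)
      ⟨a, Set.mem_compl_singleton_iff.mpr hac⟩
      ⟨b, Set.mem_compl_singleton_iff.mpr hbd⟩ i' p') :
    p - p' ∈ Ideal.span (B0Set F) := by
  obtain ⟨m, r, hr, hne, hcompl, hirr, rfl⟩ := hp
  obtain ⟨m', r', hr', hne', hcompl', hirr', rfl⟩ := hp'
  have hi' : IsRestriction i i' := ⟨hd, hcompat⟩
  have hsep : Separated F X a c hac := hstab X hX (Emb.id X)
  obtain ⟨π, hπ, hπr⟩ := exists_bijective_of_reps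
    (P := fun A : LAmalg i => MemUpIso F A.Z ∧ A.j₁.toFun a ≠ A.j₂.toFun b)
    (Q := fun B : LAmalg i' => MemUpIso F B.Z ∧ B.j₁.toFun ⟨a, hac⟩ ≠ B.j₂.toFun ⟨b, hbd⟩)
    Amalg.iso_equivalence
    (fun l => ⟨hr' l, hne' l⟩) (fun A hA => hcompl A hA.1 hA.2) hirr
    (fun B hB => hcompl' B hB.1 hB.2) hirr' (derivedAmalg hi')
    (fun k => ⟨memUpIso_restrict hF (hr k) _, fun h => hne k (congrArg Subtype.val h)⟩)
    (fun _ _ h => h.derived hi')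
    (fun k₁ k₂ => Amalg.Iso.of_derived hF hi' hiso (hr k₂) (hne k₁) (hstab _ (hr k₁) _))
    (fun B hB => hi'.exists_iso_derivedAmalg hF hsep hY B hB.1 hB.2)
  have hsum : ∑ k, mVar ((r k).Z.erase ((r k).j₁.toFun c)) (memUpIso_restrict hF (hr k) _)
        ⟨(r k).j₁.toFun a, fun h => hac ((r k).j₁.inj h)⟩ =
      ∑ l, mVar (r' l).Z (hr' l) ((r' l).j₁.toFun ⟨a, hac⟩) :=
    Fintype.sum_bijective π hπ _ _ fun k =>
      let ⟨f, hf, hf₁, _⟩ := hπr k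
      mVar_congr _ _ ⟨f, hf, hf₁ ⟨a, hac⟩⟩
  rw [hi'.lExtends_iff hF hiso hsep hY, ← hsum]
  convert Ideal.sub_mem _ (mVar_sub_mVar_erase_mem_span_B0Set hF hX hsep) (Ideal.sum_mem _
    fun k _ => mVar_sub_mVar_erase_mem_span_B0Set hF (hr k) (hstab _ (hr k) (r k).j₁)) using 1
  rw [Finset.sum_sub_distrib]
  ring

end Paper
end

section
/- Let k be an algebraic number field, let t ∈ k be an element that is not equal to (the image of) any natural number, and let r > 0 be an integer. Then there exist a prime number p, a prime ideal 𝔭 of the ring of integers 𝒪_k lying over p, and a natural number n with r < n < p, such that t is integral at 𝔭 (i.e. t lies in the localization of 𝒪_k at 𝔭, viewed inside k) and t ≡ n modulo 𝔭 (i.e. t − n lies in the maximal ideal of that localization). -/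
open NumberField Polynomial

set_option maxHeartbeats 1000000
set_option synthInstance.maxHeartbeats 400000

theorem aux_growth (k : Type*) [Field k] [NumberField k] (a b : 𝓞 k) (hb : b ≠ 0) (B : ℤ) :
    ∃ N : ℕ, ∀ n : ℕ, N ≤ n → B < |Algebra.norm ℤ (a - (n : 𝓞 k) * b)| := by
  classical
  have hne : (Finset.univ : Finset (InfinitePlace k)).Nonempty := Finset.univ_nonempty
  set A : ℝ := Finset.univ.sup' hne (fun w : InfinitePlace k => w (a : k)) with hA
  set β : ℝ := Finset.univ.inf' hne (fun w : InfinitePlace k => w (b : k)) with hβ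
  have hβpos : 0 < β := by
    rw [hβ, Finset.lt_inf'_iff]
    intro w _
    exact InfinitePlace.pos_iff.mpr (by exact_mod_cast hb)
  obtain ⟨N, hN⟩ := exists_nat_gt ((A + |(B : ℝ)| + 1) / β)
  refine ⟨N, fun n hn => ?_⟩
  set x : 𝓞 k := a - (n : 𝓞 k) * b with hx
  have key : ∀ w : InfinitePlace k, |(B:ℝ)| + 1 ≤ w (x : k) := by
    intro w
    have h1 : w ((a : k)) ≤ A :=
      Finset.le_sup' (fun w : InfinitePlace k => w (a : k)) (Finset.mem_univ w)
    have h2 : β ≤ w ((b : k)) := Finset.inf'_le _ (Finset.mem_univ w)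
    have hxk : (x : k) = (a:k) - ((n : k) * (b : k)) := by
      push_cast [hx]; ring
    have hwnb : w ((n : k) * (b : k)) = n * w (b:k) := by
      rw [map_mul]
      congr 1
      rw [← InfinitePlace.norm_embedding_eq, map_natCast]
      simp
    have tri0 : w ((n:k) * (b:k)) - w ((a:k)) ≤ w ((n:k) * (b:k) - (a:k)) :=
      w.1.le_sub _ _
    have heq : w ((n:k) * (b:k) - (a:k)) = w ((a:k) - (n:k) * (b:k)) := w.1.map_sub _ _
    have tri : w ((n:k) * (b:k)) - w ((a:k)) ≤ w (x : k) := by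
      rw [hxk]; rw [heq] at tri0; exact tri0
    have hnN : ((A + |(B : ℝ)| + 1) / β) < (n : ℝ) := lt_of_lt_of_le hN (by exact_mod_cast hn)
    have hprod : A + |(B:ℝ)| + 1 < n * β := by
      rw [div_lt_iff₀ hβpos] at hnN
      linarith
    have : A + |(B:ℝ)| + 1 ≤ n * w ((b:k)) := by
      calc A + |(B:ℝ)| + 1 ≤ n * β := le_of_lt hprod
        _ ≤ n * w ((b:k)) := by
            apply mul_le_mul_of_nonneg_left h2 (Nat.cast_nonneg n)
    nlinarith [hwnb, tri, h1]
  have hone : ∀ w : InfinitePlace k, (1:ℝ) ≤ w (x : k) := fun w =>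
    le_trans (by linarith [abs_nonneg ((B:ℝ))]) (key w)
  have hprodnorm :
      |(B:ℝ)| + 1 ≤ |((Algebra.norm ℤ x : ℤ) : ℝ)| := by
    obtain ⟨w₀⟩ := (inferInstance : Nonempty (InfinitePlace k))
    have h1 : |(B:ℝ)| + 1 ≤ w₀ (x:k) ^ w₀.mult :=
      le_trans (key w₀) (le_self_pow₀ (hone w₀) InfinitePlace.mult_ne_zero)
    have herase : (1:ℝ) ≤ ∏ w ∈ Finset.univ.erase w₀, w (x:k) ^ w.mult := by
      have := Finset.prod_le_prod (s := Finset.univ.erase w₀)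
        (f := fun _ : InfinitePlace k => (1:ℝ)) (g := fun w : InfinitePlace k => w (x:k) ^ w.mult)
        (by intros; norm_num) (fun i _ => one_le_pow₀ (hone i))
      simpa using this
    have h2 : w₀ (x:k) ^ w₀.mult ≤ ∏ w : InfinitePlace k, w (x:k) ^ w.mult := by
      rw [← Finset.mul_prod_erase Finset.univ _ (Finset.mem_univ w₀)]
      exact le_mul_of_one_le_right (by positivity) herase
    have h3 := InfinitePlace.prod_eq_abs_norm (x : k)
    rw [← Algebra.coe_norm_int] at h3
    have : ∏ w : InfinitePlace k, w (x:k) ^ w.mult = |((Algebra.norm ℤ x : ℤ) : ℝ)| := by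
      rw [h3]
      push_cast
      ring
    linarith
  have hB : (B : ℝ) < |((Algebra.norm ℤ x : ℤ) : ℝ)| := by
    have : (B:ℝ) ≤ |(B:ℝ)| := le_abs_self _
    linarith
  have := hB
  rw [← Int.cast_abs] at this
  exact_mod_cast this

theorem aux_poly (k : Type*) [Field k] [NumberField k] (a b : 𝓞 k) :
    ∃ P : Polynomial ℤ, ∀ n : ℕ, P.eval (n : ℤ) = Algebra.norm ℤ (a - (n : 𝓞 k) * b) := by
  classical
  let B := Module.Free.chooseBasis ℤ (𝓞 k)
  let Ma := Algebra.leftMulMatrix B a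
  let Mb := Algebra.leftMulMatrix B b
  let M : Matrix _ _ (Polynomial ℤ) := Matrix.of fun i j => C (Ma i j) - X * C (Mb i j)
  refine ⟨M.det, fun n => ?_⟩
  have h1 : (evalRingHom (n:ℤ)) M.det = (M.map (evalRingHom (n:ℤ))).det :=
    RingHom.map_det _ _
  have h2 : M.map (evalRingHom (n:ℤ)) = Algebra.leftMulMatrix B (a - (n : 𝓞 k) * b) := by
    ext i j
    have : a - (n : 𝓞 k) * b = a - (n : ℤ) • b := by
      rw [zsmul_eq_mul]; norm_cast
    rw [this, map_sub, map_zsmul, Matrix.sub_apply, Matrix.smul_apply, smul_eq_mul]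
    simp [M, Ma, Mb, mul_comm]
  calc M.det.eval (n:ℤ) = (evalRingHom (n:ℤ)) M.det := rfl
    _ = (M.map (evalRingHom (n:ℤ))).det := h1
    _ = (Algebra.leftMulMatrix B (a - (n : 𝓞 k) * b)).det := by rw [h2]
    _ = Algebra.norm ℤ (a - (n : 𝓞 k) * b) := (Algebra.norm_eq_matrix_det B _).symm

/-- For a number field `k` and `t ∈ k` not a natural number, and any `r > 0`, there is a
prime ideal `𝔭` of `𝒪_k` over a rational prime `p` and a natural number `n` with
`r < n < p` such that `t` is `𝔭`-integral (i.e. `t = a/b` with `b ∉ 𝔭`) and `t ≡ n mod 𝔭`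
(i.e. `a - n·b ∈ 𝔭`). -/
theorem exists_prime_congruent_nat (k : Type*) [Field k] [NumberField k] (t : k)
    (ht : ∀ m : ℕ, t ≠ m) (r : ℕ) (hr : 0 < r) :
    ∃ (p : ℕ) (𝔭 : Ideal (𝓞 k)) (n : ℕ),
      p.Prime ∧ 𝔭.IsPrime ∧
      Ideal.comap (algebraMap ℤ (𝓞 k)) 𝔭 = Ideal.span {(p : ℤ)} ∧
      r < n ∧ n < p ∧
      ∃ a b : 𝓞 k, b ∉ 𝔭 ∧ t * algebraMap (𝓞 k) k b = algebraMap (𝓞 k) k a ∧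
        a - (n : 𝓞 k) * b ∈ 𝔭 := by
  classical
  obtain ⟨⟨a, b⟩, hab⟩ := IsLocalization.surj (nonZeroDivisors (𝓞 k)) t
  have hb0 : (b : 𝓞 k) ≠ 0 := nonZeroDivisors.coe_ne_zero b
  obtain ⟨P, hP⟩ := aux_poly k a (b : 𝓞 k)
  set g : ℕ → ℤ := fun n => Algebra.norm ℤ (a - (n : 𝓞 k) * (b : 𝓞 k)) with hg
  have hbk : algebraMap (𝓞 k) k (b : 𝓞 k) ≠ 0 := fun h =>
    hb0 ((map_eq_zero_iff _ (IsFractionRing.injective (𝓞 k) k)).mp h)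
  have hx0 : ∀ n : ℕ, a - (n : 𝓞 k) * (b : 𝓞 k) ≠ 0 := by
    intro n h
    apply ht n
    have h1 : a = (n : 𝓞 k) * (b : 𝓞 k) := by linear_combination h
    have h2 : algebraMap (𝓞 k) k a = (n : k) * algebraMap (𝓞 k) k (b : 𝓞 k) := by
      rw [h1, map_mul, map_natCast]
    rw [← hab] at h2
    exact mul_right_cancel₀ hbk h2
  have hg0 : ∀ n, g n ≠ 0 := fun n => (Algebra.norm_ne_zero_iff).mpr (hx0 n)
  set c : ℤ := g 0 with hc
  set Pr : ℤ := ∏ i ∈ Finset.range (r + 1), g i with hPr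
  set E : ℤ := c * Pr * Algebra.norm ℤ (b : 𝓞 k) with hE
  have hnb0 : Algebra.norm ℤ (b : 𝓞 k) ≠ 0 := (Algebra.norm_ne_zero_iff).mpr hb0
  have hE0 : E ≠ 0 :=
    mul_ne_zero (mul_ne_zero (hg0 0) (Finset.prod_ne_zero_iff.mpr fun i _ => hg0 i)) hnb0
  obtain ⟨N, hN⟩ := aux_growth k a (b : 𝓞 k) hb0 |c|
  set n₁ : ℕ := (c * E).natAbs * (N + 1) with hn₁
  have hcE0 : c * E ≠ 0 := mul_ne_zero (hg0 0) hE0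
  have hn₁N : N ≤ n₁ := by
    have h1 : 1 ≤ (c * E).natAbs := Nat.one_le_iff_ne_zero.mpr (Int.natAbs_ne_zero.mpr hcE0)
    calc N ≤ N + 1 := Nat.le_succ _
      _ = 1 * (N + 1) := (one_mul _).symm
      _ ≤ (c * E).natAbs * (N + 1) := Nat.mul_le_mul_right _ h1
  have hgrow : |c| < |g n₁| := hN n₁ hn₁N
  have hdvd : c * E ∣ g n₁ - c := by
    have h1 : ((n₁ : ℤ) - ((0 : ℕ) : ℤ)) ∣ P.eval (n₁ : ℤ) - P.eval ((0 : ℕ) : ℤ) :=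
      sub_dvd_eval_sub _ _ _
    rw [hP, hP] at h1
    have h2 : c * E ∣ ((n₁ : ℤ) - ((0 : ℕ) : ℤ)) := by
      have h3 : c * E ∣ ((c * E).natAbs : ℤ) := Int.dvd_natAbs.mpr dvd_rfl
      have h4 : ((n₁ : ℤ) - ((0 : ℕ) : ℤ)) = ((c * E).natAbs : ℤ) * ((N : ℤ) + 1) := by
        push_cast [hn₁]; ring
      rw [h4]
      exact h3.mul_right _
    have := h2.trans h1
    simpa [hg, hc] using this
  obtain ⟨w, hw⟩ := hdvd
  set e : ℤ := 1 + E * w with he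
  have hge : g n₁ = c * e := by rw [he]; linear_combination hw
  have hcabs : 0 < c.natAbs := Nat.pos_of_ne_zero (Int.natAbs_ne_zero.mpr (hg0 0))
  have he1 : 1 < e.natAbs := by
    have h1 : (g n₁).natAbs = c.natAbs * e.natAbs := by rw [hge, Int.natAbs_mul]
    have h2 : c.natAbs < (g n₁).natAbs := by
      have := hgrow
      rw [Int.abs_eq_natAbs, Int.abs_eq_natAbs] at this
      exact_mod_cast this
    rw [h1] at h2
    exact (lt_mul_iff_one_lt_right hcabs).mp h2
  obtain ⟨p, hp, hpe⟩ := Nat.exists_prime_and_dvd (Nat.ne_of_gt he1)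
  have hpe' : (p : ℤ) ∣ e := Int.dvd_natAbs.mp (Int.natCast_dvd_natCast.mpr hpe)
  have hpE : ¬(p : ℤ) ∣ E := by
    intro h
    have h1 : (p : ℤ) ∣ 1 := by
      have := dvd_sub hpe' (h.mul_right w)
      simpa [he] using this
    have := Int.le_of_dvd one_pos h1
    have := hp.one_lt
    omega
  have hpg1 : (p : ℤ) ∣ g n₁ := hge ▸ hpe'.mul_left c
  set n' : ℕ := n₁ % p with hn'
  have hplt : n' < p := Nat.mod_lt _ hp.pos
  have hpgn' : (p : ℤ) ∣ g n' := by
    have hle : n' ≤ n₁ := Nat.mod_le _ _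
    have hd : (p : ℤ) ∣ (n₁ : ℤ) - (n' : ℤ) := by
      have h5 : n₁ - n' = p * (n₁ / p) := by
        have := Nat.mod_add_div n₁ p
        omega
      refine ⟨(n₁ / p : ℕ), ?_⟩
      have : ((n₁ - n' : ℕ) : ℤ) = ((p * (n₁ / p) : ℕ) : ℤ) := by rw [h5]
      push_cast at this
      omega
    have hdiff : (p : ℤ) ∣ g n₁ - g n' := by
      refine hd.trans ?_
      have := sub_dvd_eval_sub (n₁ : ℤ) ((n' : ℕ) : ℤ) P
      rwa [hP, hP] at this
    have := dvd_sub hpg1 hdiff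
    simpa using this
  have hrn' : r < n' := by
    by_contra hle
    push_neg at hle
    have hmem : n' ∈ Finset.range (r + 1) := Finset.mem_range.mpr (by omega)
    have h1 : g n' ∣ Pr := Finset.dvd_prod_of_mem _ hmem
    have h2 : Pr ∣ E := (dvd_mul_left Pr c).mul_right _
    exact hpE ((hpgn'.trans h1).trans h2)
  set x' : 𝓞 k := a - (n' : 𝓞 k) * (b : 𝓞 k) with hx'
  have hxg : Ideal.absNorm (Ideal.span {x'}) = (g n').natAbs := by
    rw [Ideal.absNorm_span_singleton]
  have habs0 : Ideal.absNorm (Ideal.span {x'}) ≠ 0 := by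
    rw [hxg]; exact Int.natAbs_ne_zero.mpr (hg0 n')
  have hfin : Finite (𝓞 k ⧸ Ideal.span {x'}) := (Ideal.absNorm_ne_zero_iff _).mp habs0
  letI := Fintype.ofFinite (𝓞 k ⧸ Ideal.span {x'})
  have hpcard : p ∣ Fintype.card (𝓞 k ⧸ Ideal.span {x'}) := by
    have h1 : p ∣ (g n').natAbs := Int.natCast_dvd_natCast.mp (Int.dvd_natAbs.mpr hpgn')
    have h2 : Ideal.absNorm (Ideal.span {x'}) = Fintype.card (𝓞 k ⧸ Ideal.span {x'}) := by
      rw [Ideal.absNorm_apply, Submodule.cardQuot_apply, Nat.card_eq_fintype_card]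
    rw [← h2, hxg]
    exact h1
  haveI : Fact p.Prime := ⟨hp⟩
  obtain ⟨y, hy⟩ := exists_prime_addOrderOf_dvd_card p hpcard
  have hy0 : y ≠ 0 := by
    intro h
    rw [h, addOrderOf_zero] at hy
    exact hp.one_lt.ne hy
  have hpy : p • y = 0 := by rw [← hy]; exact addOrderOf_nsmul_eq_zero y
  have htop : Ideal.span ({x', (p : 𝓞 k)} : Set (𝓞 k)) ≠ ⊤ := by
    intro h
    have h1 : (1 : 𝓞 k) ∈ Ideal.span ({x', (p : 𝓞 k)} : Set (𝓞 k)) := by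
      rw [h]; exact Submodule.mem_top
    obtain ⟨u, v, huv⟩ := Ideal.mem_span_pair.mp h1
    have h2 := congrArg (Ideal.Quotient.mk (Ideal.span {x'})) huv
    have hx'0 : Ideal.Quotient.mk (Ideal.span {x'}) x' = 0 :=
      Ideal.Quotient.eq_zero_iff_mem.mpr (Ideal.subset_span rfl)
    rw [map_add, map_mul, map_mul, hx'0, mul_zero, zero_add, map_one, map_natCast] at h2
    have h3 : y = 0 := by
      calc y = 1 * y := (one_mul y).symm
        _ = (Ideal.Quotient.mk (Ideal.span {x'}) v * (p : 𝓞 k ⧸ Ideal.span {x'})) * y := by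
            rw [h2]
        _ = Ideal.Quotient.mk (Ideal.span {x'}) v * ((p : 𝓞 k ⧸ Ideal.span {x'}) * y) := by
            ring
        _ = Ideal.Quotient.mk (Ideal.span {x'}) v * (p • y) := by rw [nsmul_eq_mul]
        _ = 0 := by rw [hpy, mul_zero]
    exact hy0 h3
  obtain ⟨𝔭, hmax, hle⟩ := Ideal.exists_le_maximal _ htop
  have hx'mem : x' ∈ 𝔭 := hle (Ideal.subset_span (Set.mem_insert _ _))
  have hpmem : ((p : 𝓞 k)) ∈ 𝔭 := hle (Ideal.subset_span (Set.mem_insert_of_mem _ rfl))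
  haveI : 𝔭.IsPrime := hmax.isPrime
  have hcomap : Ideal.comap (algebraMap ℤ (𝓞 k)) 𝔭 = Ideal.span {(p : ℤ)} := by
    have hmem : (p : ℤ) ∈ Ideal.comap (algebraMap ℤ (𝓞 k)) 𝔭 := by
      rw [Ideal.mem_comap, map_natCast]
      exact hpmem
    have hle2 : Ideal.span {(p : ℤ)} ≤ Ideal.comap (algebraMap ℤ (𝓞 k)) 𝔭 :=
      (Ideal.span_singleton_le_iff_mem _).mpr hmem
    have hmax2 : (Ideal.span {(p : ℤ)}).IsMaximal :=
      PrincipalIdealRing.isMaximal_of_irreducible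
        (Int.prime_iff_natAbs_prime.mpr (by simpa using hp)).irreducible
    have hne : Ideal.comap (algebraMap ℤ (𝓞 k)) 𝔭 ≠ ⊤ :=
      (Ideal.IsPrime.comap (algebraMap ℤ (𝓞 k))).ne_top
    exact (hmax2.eq_of_le hne hle2).symm
  have hbnot : (b : 𝓞 k) ∉ 𝔭 := by
    intro hbmem
    have h1 : Ideal.absNorm 𝔭 ∣ (Algebra.norm ℤ (b : 𝓞 k)).natAbs := by
      rw [← Ideal.absNorm_span_singleton]
      exact Ideal.absNorm_dvd_absNorm_of_le ((Ideal.span_singleton_le_iff_mem _).mpr hbmem)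
    have h2 : Ideal.absNorm 𝔭 ∣ p ^ Fintype.card (Module.Free.ChooseBasisIndex ℤ (𝓞 k)) := by
      have h3 := Ideal.absNorm_dvd_norm_of_mem hpmem
      have h4 : (p : 𝓞 k) = algebraMap ℤ (𝓞 k) ((p : ℕ) : ℤ) := by rw [map_natCast]
      rw [h4, Algebra.norm_algebraMap_of_basis (Module.Free.chooseBasis ℤ (𝓞 k))] at h3
      exact_mod_cast h3
    have h3 : Ideal.absNorm 𝔭 ≠ 1 := by
      rw [Ne, Ideal.absNorm_eq_one_iff]
      exact hmax.ne_top
    obtain ⟨i, hi, hieq⟩ := (Nat.dvd_prime_pow hp).mp h2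
    have hi0 : i ≠ 0 := by
      rintro rfl
      rw [pow_zero] at hieq
      exact h3 hieq
    have hpabs : p ∣ Ideal.absNorm 𝔭 := hieq ▸ dvd_pow_self p hi0
    have h5 : (p : ℤ) ∣ Algebra.norm ℤ (b : 𝓞 k) :=
      Int.dvd_natAbs.mp (Int.natCast_dvd_natCast.mpr (hpabs.trans h1))
    exact hpE (h5.trans (dvd_mul_left _ _))
  exact ⟨p, 𝔭, n', hp, hmax.isPrime, hcomap, hrn', hplt, a, b, hbnot, hab, hx'mem⟩
end

section
/- Let n ≥ 3 be an integer and let T be a finite tree (a finite connected acyclic simple graph) in which every vertex has valence at most n. Then every prime number p dividing the order of the automorphism group of T satisfies p ≤ n. -/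
/-!
Let `P` be a nontrivial `p`-group of automorphisms of a finite tree, `p` odd. Counting fixed points
modulo `p`, `|V| ≡ |V^P|` and `|E| ≡ |E^P|`; since `|V| - |E| = 1`, `P` fixes a vertex or an edge,
and a fixed edge has both endpoints fixed because a `P`-orbit of size `2` is impossible. As the tree
is connected and `P` moves some vertex, a fixed vertex `w` has a neighbour `v` that is moved; the
`P`-orbit of `v` lies among the neighbours of `w` and has size a positive power of `p`, so
`p ≤ deg w`. Apply this to the subgroup generated by an automorphism of order `p`.
-/

open MulAction

lemma IsPGroup.le_card_orbit_of_notMem_fixedPoints {p : ℕ} [Fact p.Prime] {G α : Type*} [Group G]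
    [MulAction G α] (hG : IsPGroup p G) {a : α} [Finite (orbit G a)]
    (ha : a ∉ fixedPoints G α) : p ≤ Nat.card (orbit G a) := by
  obtain ⟨k, hk⟩ := hG.card_orbit a
  have : Fintype (orbit G a) := Fintype.ofFinite _
  have hk0 : k ≠ 0 := by
    rintro rfl
    rw [mem_fixedPoints_iff_card_orbit_eq_one, ← Nat.card_eq_fintype_card, hk, pow_zero] at ha
    exact ha rfl
  exact hk ▸ Nat.le_self_pow hk0 p

namespace SimpleGraph

variable {V : Type*} {G : SimpleGraph V}

instance Iso.applyMulActionEdgeSet : MulAction (G ≃g G) G.edgeSet where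
  smul φ e := ⟨Sym2.map φ e, φ.toHom.map_mem_edgeSet e.2⟩
  one_smul e := Subtype.ext (congrFun Sym2.map_id' e.1)
  mul_smul φ ψ e := Subtype.ext (Sym2.map_map (g := ⇑φ) (f := ⇑ψ) e.1).symm

@[simp]
lemma Iso.coe_smul_edgeSet (φ : G ≃g G) (e : G.edgeSet) :
    ((φ • e : G.edgeSet) : Sym2 V) = Sym2.map φ e := rfl

instance Iso.finite [Finite V] : Finite (G ≃g G) :=
  Finite.of_injective (fun φ : G ≃g G ↦ (φ : V → V)) DFunLike.coe_injective

variable {p : ℕ} [Fact p.Prime] {P : Subgroup (G ≃g G)}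

lemma mem_fixedPoints_of_mem_of_mem_fixedPoints_edgeSet (hp : p ≠ 2) (hP : IsPGroup p P)
    {e : G.edgeSet} (he : e ∈ fixedPoints P G.edgeSet) {v : V} (hv : v ∈ (e : Sym2 V)) :
    v ∈ fixedPoints P V := by
  obtain ⟨w, hw⟩ := Sym2.mem_iff_exists.mp hv
  have horbit : orbit P v ⊆ {v, w} := by
    rintro _ ⟨g, rfl⟩
    have := congrArg Subtype.val (he g)
    rw [Subgroup.smul_def, Iso.coe_smul_edgeSet, hw, Sym2.map_mk] at this
    exact Sym2.mem_iff.mp (this ▸ Sym2.mem_mk_left _ _)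
  have : Finite (orbit P v) := ((Set.toFinite _).subset horbit).to_subtype
  have hcard : Nat.card (orbit P v) ≤ 2 := by
    rw [Nat.card_coe_set_eq]
    exact (Set.ncard_le_ncard horbit).trans <| (Set.ncard_insert_le v {w}).trans_eq <| by
      rw [Set.ncard_singleton]
  by_contra hfix
  have := (hP.le_card_orbit_of_notMem_fixedPoints hfix).trans hcard
  have := (Fact.out : p.Prime).two_le
  omega

lemma IsTree.exists_mem_fixedPoints_of_isPGroup [Finite V] (hG : G.IsTree) (hp : p ≠ 2)
    (hP : IsPGroup p P) : (fixedPoints P V).Nonempty := by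
  by_cases hV : p ∣ Nat.card V
  · have hE : ¬ p ∣ Nat.card G.edgeSet := by
      have : Fintype V := Fintype.ofFinite V
      classical
      have := hG.card_edgeFinset
      rw [edgeFinset_card, ← Nat.card_eq_fintype_card, ← Nat.card_eq_fintype_card] at this
      rw [← this] at hV
      exact fun h ↦ (Fact.out : p.Prime).one_lt.ne' (Nat.dvd_one.mp ((Nat.dvd_add_right h).mp hV))
    obtain ⟨e, he⟩ := hP.nonempty_fixed_point_of_prime_not_dvd_card G.edgeSet hE
    exact ⟨_, mem_fixedPoints_of_mem_of_mem_fixedPoints_edgeSet hp hP he e.1.out_fst_mem⟩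
  · exact hP.nonempty_fixed_point_of_prime_not_dvd_card V hV

lemma Preconnected.exists_adj_mem_notMem (hG : G.Preconnected) {s : Set V} {u v : V}
    (hu : u ∈ s) (hv : v ∉ s) : ∃ x ∈ s, ∃ y ∉ s, G.Adj x y := by
  obtain ⟨d, -, hd₁, hd₂⟩ := (hG u v).some.exists_boundary_dart s hu hv
  exact ⟨d.fst, hd₁, d.snd, hd₂, d.adj⟩

lemma le_degree_of_adj_of_mem_fixedPoints (hP : IsPGroup p P) {v w : V}
    [Fintype (G.neighborSet w)] (hw : w ∈ fixedPoints P V) (hv : v ∉ fixedPoints P V)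
    (hadj : G.Adj w v) : p ≤ G.degree w := by
  have horbit : orbit P v ⊆ G.neighborSet w := by
    rintro _ ⟨g, rfl⟩
    rw [mem_neighborSet, ← hw g]
    exact (g : G ≃g G).map_adj_iff.mpr hadj
  have : Finite (orbit P v) := ((Set.toFinite _).subset horbit).to_subtype
  calc p ≤ Nat.card (orbit P v) := hP.le_card_orbit_of_notMem_fixedPoints hv
    _ ≤ Nat.card (G.neighborSet w) := Nat.card_mono (Set.toFinite _) horbit
    _ = G.degree w := by rw [Nat.card_eq_fintype_card, card_neighborSet_eq_degree]

lemma IsTree.exists_le_degree_of_isPGroup [Finite V] [G.LocallyFinite] (hG : G.IsTree)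
    (hp : p ≠ 2) (hP : IsPGroup p P) (hPbot : P ≠ ⊥) : ∃ w, p ≤ G.degree w := by
  obtain ⟨u, hu⟩ := hG.exists_mem_fixedPoints_of_isPGroup hp hP
  obtain ⟨v, hv⟩ : ∃ v, v ∉ fixedPoints P V := by
    obtain ⟨g, hg⟩ := Subgroup.ne_bot_iff_exists_ne_one.mp hPbot
    by_contra! h
    exact hg (Subtype.ext (RelIso.ext fun v ↦ h v g))
  obtain ⟨w, hw, x, hx, hadj⟩ := hG.connected.preconnected.exists_adj_mem_notMem hu hv
  exact ⟨w, le_degree_of_adj_of_mem_fixedPoints hP hw hx hadj⟩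

end SimpleGraph

theorem tree_aut_prime_le (n : ℕ) (hn : 3 ≤ n) {V : Type*} [Fintype V]
    (G : SimpleGraph V) [DecidableRel G.Adj] (hT : G.IsTree)
    (hdeg : ∀ v : V, G.degree v ≤ n) {p : ℕ} (hp : p.Prime)
    (hdvd : p ∣ Nat.card (G ≃g G)) : p ≤ n := by
  have : Fact p.Prime := ⟨hp⟩
  by_contra! hnp
  obtain ⟨φ, hφ⟩ := exists_prime_orderOf_dvd_card' p hdvd
  have hP : IsPGroup p (Subgroup.zpowers φ) :=
    IsPGroup.of_card (n := 1) (by rw [Nat.card_zpowers, hφ, pow_one])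
  have hPbot : Subgroup.zpowers φ ≠ ⊥ := by
    rw [Ne, Subgroup.zpowers_eq_bot, ← orderOf_eq_one_iff, hφ]
    exact hp.one_lt.ne'
  obtain ⟨w, hw⟩ := hT.exists_le_degree_of_isPGroup (by omega) hP hPbot
  exact (hw.trans (hdeg w)).not_gt hnp
end

section
/- Let n ≥ 3 be an integer. Given a tree structure Y ∈ 𝔗_n, a proper substructure X of Y (the induced structure on a proper subset of Y), and an integer h ≥ 1, there exist a tree structure Z ∈ 𝔗_n and an embedding j : X → Z that admits at least h pairwise distinct extensions to embeddings Y → Z (i.e. at least h distinct embeddings f : Y → Z whose restriction to X equals j). -/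
/-! # Trees and tree structures -/

namespace Paper

/-- A finite tree: a finite connected acyclic simple graph. -/
structure FinTree : Type 1 where
  V : Type
  [fin : Fintype V]
  [dec : DecidableEq V]
  G : SimpleGraph V
  [adjDec : DecidableRel G.Adj]
  isTree : G.IsTree

attribute [instance] FinTree.fin FinTree.dec FinTree.adjDec

/-- A leaf is a vertex of valence `≤ 1` (in a tree with at least two vertices this is the
same as valence exactly `1`; in a tree with at most two vertices every vertex is a leaf). -/
def FinTree.IsLeaf (T : FinTree) (v : T.V) : Prop := T.G.degree v ≤ 1

instance (T : FinTree) : DecidablePred T.IsLeaf := fun v => by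
  unfold FinTree.IsLeaf; infer_instance

/-- A node is a vertex which is not a leaf. -/
def FinTree.IsNode (T : FinTree) (v : T.V) : Prop := ¬ T.IsLeaf v

/-- A tree is reduced if it has no node of valence 2. -/
def FinTree.Reduced (T : FinTree) : Prop := ∀ v : T.V, T.G.degree v ≠ 2

/-- The quaternary relation on the vertices of a tree: the four vertices are pairwise
distinct and the path from `x₁` to `x₂` has a common edge with the path from `y₁` to
`y₂`. -/
def FinTree.pathRel (T : FinTree) (x₁ x₂ y₁ y₂ : T.V) : Prop :=
  ([x₁, x₂, y₁, y₂] : List T.V).Nodup ∧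
  ∃ (p : T.G.Walk x₁ x₂) (q : T.G.Walk y₁ y₂), p.IsPath ∧ q.IsPath ∧
    ∃ e : Sym2 T.V, e ∈ p.edges ∧ e ∈ q.edges

/-- The signature of tree structures: a single quaternary relation. -/
abbrev treeSig : Signature where
  I := Unit
  arity := fun _ => 4
  arity_pos := fun _ => by norm_num

/-- The leaf structure `L(T)` of a tree `T`: the set of leaves together with the quaternary
relation `R(x₁,x₂;y₁,y₂)` expressing that the paths `x₁–x₂` and `y₁–y₂` share an edge. -/
def FinTree.leafStruc (T : FinTree) : Struc treeSig where
  carrier := {v : T.V // T.IsLeaf v}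
  rel := fun _ v => T.pathRel (v 0).1 (v 1).1 (v 2).1 (v 3).1

/-- The class `𝔗` of all tree structures (together with the empty structure, the leaf
structure of the empty tree). -/
def TreeClass : Set (Struc treeSig) :=
  {A | IsEmpty A.carrier ∨ ∃ T : FinTree, StrucIso A T.leafStruc}

/-- The level of a tree is at most `n`: every vertex has valence at most `n`. -/
def FinTree.LevelLe (T : FinTree) (n : ℕ) : Prop := ∀ v : T.V, T.G.degree v ≤ n

/-- The class `𝔗_n` of tree structures of level at most `n`. -/
def TreeClassN (n : ℕ) : Set (Struc treeSig) :=
  {A | IsEmpty A.carrier ∨ ∃ T : FinTree, T.LevelLe n ∧ StrucIso A T.leafStruc}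

theorem leafStruc_mem_treeClass (T : FinTree) : T.leafStruc ∈ TreeClass :=
  Or.inr ⟨T, strucIso_refl _⟩

/-- The set of leaves of a tree. -/
def FinTree.leafFinset (T : FinTree) : Finset T.V := Finset.univ.filter T.IsLeaf

/-- The number of leaves, `ℓ(T)`. -/
def FinTree.nLeaves (T : FinTree) : ℕ := T.leafFinset.card

/-- The set of nodes of a tree. -/
def FinTree.nodeFinset (T : FinTree) : Finset T.V := Finset.univ.filter (fun v => ¬ T.IsLeaf v)

/-- The number of nodes, `n(T)`. -/
def FinTree.nNodes (T : FinTree) : ℕ := T.nodeFinset.card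

end Paper

namespace SimpleGraph

variable {V W : Type*} {G : SimpleGraph V} {H : SimpleGraph W}

theorem IsTree.sum_sup_edge [Finite V] [Finite W] (hG : G.IsTree) (hH : H.IsTree) (v : V)
    (w : W) : ((G ⊕g H) ⊔ edge (.inl v) (.inr w)).IsTree := by
  rw [isTree_iff_connected_and_card] at hG hH ⊢
  refine ⟨hG.1.sum_sup_edge hH.1, ?_⟩
  have hnot : s(Sum.inl v, Sum.inr w) ∉ (G ⊕g H).edgeSet := by simp
  rw [edgeSet_sup, edgeSet_edge_of_ne Sum.inl_ne_inr, Set.union_singleton,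
    Nat.card_coe_set_eq, Set.ncard_insert_of_notMem hnot, ← Nat.card_coe_set_eq,
    Nat.card_congr edgeSetSumEquiv, Nat.card_sum, Nat.card_sum, ← hG.2, ← hH.2]
  ring

instance sum.adjDecidable [DecidableRel G.Adj] [DecidableRel H.Adj] : DecidableRel (G ⊕g H).Adj
  | .inl _, .inl _ => decidable_of_iff _ sum_adj_inl.symm
  | .inl _, .inr _ => .isFalse (by simp)
  | .inr _, .inl _ => .isFalse (by simp)
  | .inr _, .inr _ => decidable_of_iff _ sum_adj_inr.symm

variable [Fintype V] [Fintype W] [DecidableEq V] [DecidableEq W]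
  [DecidableRel G.Adj] [DecidableRel H.Adj] (v : V) (w : W)

theorem degree_sum_sup_edge_inl (a : V) :
    ((G ⊕g H) ⊔ edge (.inl v) (.inr w)).degree (.inl a) =
      G.degree a + if a = v then 1 else 0 := by
  have : ((G ⊕g H) ⊔ edge (.inl v) (.inr w)).neighborFinset (.inl a) =
      (G.neighborFinset a).map .inl ∪ if a = v then {.inr w} else ∅ := by
    ext (b | b) <;> by_cases hav : a = v <;> simp [edge_adj, hav]
  rw [← card_neighborFinset_eq_degree, this, Finset.card_union_of_disjoint, Finset.card_map,
    card_neighborFinset_eq_degree]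
  · split_ifs <;> rfl
  · split_ifs <;> simp

theorem degree_sum_sup_edge_inr (b : W) :
    ((G ⊕g H) ⊔ edge (.inl v) (.inr w)).degree (.inr b) =
      H.degree b + if b = w then 1 else 0 := by
  have : ((G ⊕g H) ⊔ edge (.inl v) (.inr w)).neighborFinset (.inr b) =
      (H.neighborFinset b).map .inr ∪ if b = w then {.inl v} else ∅ := by
    ext (c | c) <;> by_cases hbw : b = w <;> simp [edge_adj, hbw]
  rw [← card_neighborFinset_eq_degree, this, Finset.card_union_of_disjoint, Finset.card_map,
    card_neighborFinset_eq_degree]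
  · split_ifs <;> rfl
  · split_ifs <;> simp

end SimpleGraph

open Function in
theorem Function.Injective.update_of_notMem_range {α β : Type*} [DecidableEq α] {f : α → β}
    (hf : Injective f) {a : α} {b : β} (hb : b ∉ Set.range f) : Injective (update f a b) := by
  intro x y hxy
  by_cases hx : x = a <;> by_cases hy : y = a <;>
    simp only [hx, hy, update_self, ne_eq, not_false_eq_true, update_of_ne] at hxy
  · exact hx.trans hy.symm
  · exact (hb ⟨y, hxy.symm⟩).elim
  · exact (hb ⟨x, hxy⟩).elim
  · exact hf hxy

namespace Paper

open SimpleGraph Function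

namespace FinTree

variable {T U : FinTree}

noncomputable def path (T : FinTree) (a b : T.V) : T.G.Walk a b :=
  (T.isTree.existsUnique_path a b).exists.choose

theorem path_isPath (T : FinTree) (a b : T.V) : (T.path a b).IsPath :=
  (T.isTree.existsUnique_path a b).exists.choose_spec

theorem eq_path {a b : T.V} {p : T.G.Walk a b} (hp : p.IsPath) : p = T.path a b :=
  (T.isTree.existsUnique_path a b).unique hp (T.path_isPath a b)

theorem pathRel_iff {x₁ x₂ y₁ y₂ : T.V} :
    T.pathRel x₁ x₂ y₁ y₂ ↔ [x₁, x₂, y₁, y₂].Nodup ∧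
      ∃ e ∈ (T.path x₁ x₂).edges, e ∈ (T.path y₁ y₂).edges := by
  refine and_congr_right fun _ => ⟨?_, fun ⟨e, he₁, he₂⟩ => ⟨_, _, T.path_isPath _ _,
    T.path_isPath _ _, e, he₁, he₂⟩⟩
  rintro ⟨p, q, hp, hq, e, he₁, he₂⟩
  exact ⟨e, eq_path hp ▸ he₁, eq_path hq ▸ he₂⟩

theorem pathRel_comm_left {x₁ x₂ y₁ y₂ : T.V} :
    T.pathRel x₁ x₂ y₁ y₂ ↔ T.pathRel x₂ x₁ y₁ y₂ := by
  constructor <;> rintro ⟨hnd, p, q, hp, hq, e, hep, heq⟩ <;>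
    exact ⟨by simp_all [List.nodup_cons]; tauto, p.reverse, q, hp.reverse, hq, e,
      by rwa [Walk.edges_reverse, List.mem_reverse], heq⟩

theorem pathRel_comm {x₁ x₂ y₁ y₂ : T.V} :
    T.pathRel x₁ x₂ y₁ y₂ ↔ T.pathRel y₁ y₂ x₁ x₂ := by
  constructor <;> rintro ⟨hnd, p, q, hp, hq, e, hep, heq⟩ <;>
    exact ⟨by simp_all [List.nodup_cons]; tauto, q, p, hq, hp, e, heq, hep⟩

theorem path_map (φ : T.G ↪g U.G) (a b : T.V) :
    U.path (φ a) (φ b) = (T.path a b).map φ.toHom :=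
  (eq_path ((T.path_isPath a b).map (f := φ.toHom) φ.injective)).symm

theorem path_cons_map (φ : T.G ↪g U.G) {p : U.V} {v : T.V} (hp : U.G.Adj p (φ v))
    (hpφ : p ∉ Set.range φ) (x : T.V) :
    U.path p (φ x) = .cons hp ((T.path v x).map φ.toHom) := by
  refine (eq_path ?_).symm
  rw [Walk.cons_isPath_iff, Walk.support_map]
  refine ⟨(T.path_isPath v x).map φ.injective, fun h => hpφ ?_⟩
  obtain ⟨a, -, ha⟩ := List.mem_map.mp h
  exact ⟨a, ha⟩

theorem pathRel_map (φ : T.G ↪g U.G) {a b c d : T.V} :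
    U.pathRel (φ a) (φ b) (φ c) (φ d) ↔ T.pathRel a b c d := by
  have hφ : Injective (Sym2.map φ) := Sym2.map.injective φ.injective
  simp only [pathRel_iff, path_map, Walk.edges_map]
  refine and_congr (List.nodup_map_iff (l := [a, b, c, d]) φ.injective) ?_
  simp [List.mem_map, hφ.eq_iff]

-- The path from `p` to `φ x` is the edge `p – φ v` followed by the image of the path from `v`,
-- and that edge lies on no image path.
theorem pathRel_pendant_map (φ : T.G ↪g U.G) {p : U.V} {v : T.V} (hp : U.G.Adj p (φ v))
    (hpφ : p ∉ Set.range φ) {x c d : T.V} (hx : x ≠ v) (hc : c ≠ v) (hd : d ≠ v) :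
    U.pathRel p (φ x) (φ c) (φ d) ↔ T.pathRel v x c d := by
  have hpy : ∀ y, p ≠ φ y := fun y h => hpφ ⟨y, h.symm⟩
  have hpe : s(p, φ v) ∉ ((T.path c d).map φ.toHom).edges := fun h => by
    have := ((T.path c d).map φ.toHom).fst_mem_support_of_mem_edges h
    rw [Walk.support_map] at this
    obtain ⟨y, -, hy⟩ := List.mem_map.mp this
    exact hpy y hy.symm
  rw [← pathRel_map φ, pathRel_iff, pathRel_iff, path_cons_map φ hp hpφ, Walk.edges_cons,
    path_map, path_map]
  refine and_congr ?_ ⟨?_, fun ⟨e, he, he'⟩ => ⟨e, List.mem_cons_of_mem _ he, he'⟩⟩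
  · simp [List.nodup_cons, hpy, φ.injective.eq_iff, Ne.symm hx, Ne.symm hc, Ne.symm hd]
  · rintro ⟨e, he, he'⟩
    obtain rfl | he := List.mem_cons.mp he
    · exact (hpe he').elim
    · exact ⟨e, he, he'⟩

theorem pathRel_update (φ : T.G ↪g U.G) {p : U.V} {v : T.V} (hp : U.G.Adj p (φ v))
    (hpφ : p ∉ Set.range φ) (a b c d : T.V) :
    U.pathRel (update φ v p a) (update φ v p b) (update φ v p c) (update φ v p d) ↔
      T.pathRel a b c d := by
  set g := update (⇑φ) v p
  have hg : Injective g := φ.injective.update_of_notMem_range hpφ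
  by_cases hnd : [a, b, c, d].Nodup
  swap
  · exact iff_of_false (fun h => hnd ((List.nodup_map_iff hg).mp h.1)) (fun h => hnd h.1)
  have key : ∀ {x y z}, x ≠ v → y ≠ v → z ≠ v →
      (U.pathRel p (g x) (g y) (g z) ↔ T.pathRel v x y z) := fun hx hy hz => by
    simp only [g, update_of_ne hx, update_of_ne hy, update_of_ne hz]
    exact pathRel_pendant_map φ hp hpφ hx hy hz
  have hgv : g v = p := update_self ..
  simp only [List.nodup_cons, List.mem_cons, not_or, List.not_mem_nil, List.nodup_nil] at hnd
  obtain ⟨⟨hab, hac, had, -⟩, ⟨hbc, hbd, -⟩, ⟨hcd, -⟩, -⟩ := hnd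
  by_cases ha : a = v
  · subst ha
    rw [hgv]
    exact key (Ne.symm hab) (Ne.symm hac) (Ne.symm had)
  by_cases hb : b = v
  · subst hb
    rw [pathRel_comm_left, pathRel_comm_left (T := T), hgv]
    exact key hab (Ne.symm hbc) (Ne.symm hbd)
  by_cases hc : c = v
  · subst hc
    rw [pathRel_comm, pathRel_comm (T := T), hgv]
    exact key (Ne.symm hcd) hac hbc
  by_cases hd : d = v
  · subst hd
    rw [pathRel_comm, pathRel_comm_left, pathRel_comm (T := T), pathRel_comm_left (T := T), hgv]
    exact key hcd had hbd
  simp only [g, update_of_ne ha, update_of_ne hb, update_of_ne hc, update_of_ne hd]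
  exact pathRel_map φ

def leafEmb (g : T.V → U.V) (hg : Injective g) (hleaf : ∀ x, T.IsLeaf x → U.IsLeaf (g x))
    (hrel : ∀ a b c d, U.pathRel (g a) (g b) (g c) (g d) ↔ T.pathRel a b c d) :
    Emb T.leafStruc U.leafStruc where
  toFun x := ⟨g x.1, hleaf x.1 x.2⟩
  inj _ _ h := Subtype.ext (hg (congrArg Subtype.val h))
  rel_iff _ w := hrel (w 0).1 (w 1).1 (w 2).1 (w 3).1

abbrev addLeaf (T : FinTree) (v : T.V) : FinTree where
  V := T.V ⊕ Unit
  G := (T.G ⊕g ⊥) ⊔ edge (.inl v) (.inr ())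
  isTree := T.isTree.sum_sup_edge .of_subsingleton v ()

def addLeafEmbedding (T : FinTree) (v : T.V) : T.G ↪g (T.addLeaf v).G where
  toFun := Sum.inl
  inj' := Sum.inl_injective
  map_rel_iff' := by simp [addLeaf, edge_adj, Function.Embedding.coeFn_mk]

theorem addLeaf_adj_inr_inl (T : FinTree) (v : T.V) :
    (T.addLeaf v).G.Adj (Sum.inr ()) (Sum.inl v) := by
  simp [addLeaf, edge_adj]

theorem degree_addLeaf_inl (T : FinTree) (v a : T.V) :
    (T.addLeaf v).G.degree (Sum.inl a) = T.G.degree a + if a = v then 1 else 0 :=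
  degree_sum_sup_edge_inl ..

theorem degree_addLeaf_inr (T : FinTree) (v : T.V) :
    (T.addLeaf v).G.degree (Sum.inr ()) = 1 := by
  simp [addLeaf, degree_sum_sup_edge_inr]

theorem isLeaf_addLeaf_inr (T : FinTree) (v : T.V) : (T.addLeaf v).IsLeaf (Sum.inr ()) :=
  (degree_addLeaf_inr T v).le

theorem IsLeaf.addLeaf_inl {v a : T.V} (ha : T.IsLeaf a) (hav : a ≠ v) :
    (T.addLeaf v).IsLeaf (Sum.inl a) := by
  show (T.addLeaf v).G.degree _ ≤ 1
  rwa [degree_addLeaf_inl, if_neg hav, add_zero]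

theorem LevelLe.addLeaf {n : ℕ} (hT : T.LevelLe n) {v : T.V} (hv : T.G.degree v < n) :
    (T.addLeaf v).LevelLe n := by
  rintro (a | ⟨⟩)
  · rw [degree_addLeaf_inl]
    split_ifs with h
    · exact h ▸ hv
    · exact hT a
  · rw [degree_addLeaf_inr]
    omega

def pendantLeafEmb (φ : T.G ↪g U.G) {v : T.V} {p : U.V} (hp : U.G.Adj p (φ v))
    (hpφ : p ∉ Set.range φ) (hpleaf : U.IsLeaf p)
    (hφ : ∀ x, x ≠ v → T.IsLeaf x → U.IsLeaf (φ x)) : Emb T.leafStruc U.leafStruc :=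
  leafEmb (update φ v p) (φ.injective.update_of_notMem_range hpφ)
    (fun x hx => by
      by_cases hxv : x = v
      · rwa [hxv, update_self]
      · rw [update_of_ne hxv]
        exact hφ x hxv hx)
    (pathRel_update φ hp hpφ)

theorem exists_leafEmb_pair {n : ℕ} (hn : 3 ≤ n) (hT : T.LevelLe n) {v : T.V}
    (hv : T.IsLeaf v) :
    ∃ U : FinTree, U.LevelLe n ∧ ∃ g₀ g₁ : Emb T.leafStruc U.leafStruc,
      g₀.toFun ⟨v, hv⟩ ≠ g₁.toFun ⟨v, hv⟩ ∧ ∀ x, x ≠ ⟨v, hv⟩ → g₀.toFun x = g₁.toFun x := by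
  let T₁ := T.addLeaf v
  let φ : T.G ↪g (T₁.addLeaf (.inl v)).G :=
    (T₁.addLeafEmbedding (.inl v)).comp (T.addLeafEmbedding v)
  have hφ : ∀ x, x ≠ v → T.IsLeaf x → (T₁.addLeaf (.inl v)).IsLeaf (φ x) := fun x hxv hx =>
    (hx.addLeaf_inl hxv).addLeaf_inl (Sum.inl_injective.ne hxv)
  have hp₀ : (T₁.addLeaf (.inl v)).G.Adj (.inl (.inr ())) (φ v) :=
    (T₁.addLeafEmbedding (.inl v)).map_adj_iff.mpr (addLeaf_adj_inr_inl T v)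
  have hp₁ : (T₁.addLeaf (.inl v)).G.Adj (.inr ()) (φ v) := addLeaf_adj_inr_inl T₁ (.inl v)
  have hlevel : (T₁.addLeaf (.inl v)).LevelLe n := by
    have hv' : T.G.degree v ≤ 1 := hv
    refine (hT.addLeaf (by omega)).addLeaf ?_
    rw [degree_addLeaf_inl, if_pos rfl]
    omega
  have hp₀φ : Sum.inl (Sum.inr ()) ∉ Set.range φ := fun ⟨_, hx⟩ => Sum.inl_ne_inr (Sum.inl.inj hx)
  have hp₁φ : Sum.inr () ∉ Set.range φ := fun ⟨_, hx⟩ => Sum.inl_ne_inr hx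
  refine ⟨_, hlevel,
    pendantLeafEmb φ hp₀ hp₀φ ((T.isLeaf_addLeaf_inr v).addLeaf_inl Sum.inr_ne_inl) hφ,
    pendantLeafEmb φ hp₁ hp₁φ (T₁.isLeaf_addLeaf_inr _) hφ, ?_, ?_⟩
  · intro h
    simpa [pendantLeafEmb, leafEmb] using congrArg Subtype.val h
  · intro x hx
    have hxv : x.1 ≠ v := fun h => hx (Subtype.ext h)
    apply Subtype.ext
    simp [pendantLeafEmb, leafEmb, update_of_ne hxv]

end FinTree

variable {σ : Signature}

def SplitsPoints (F : Set (Struc σ)) : Prop :=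
  ∀ Y ∈ F, ∀ y : Y.carrier, ∃ Z ∈ F, ∃ g₀ g₁ : Emb Y Z,
    g₀.toFun y ≠ g₁.toFun y ∧ ∀ x, x ≠ y → g₀.toFun x = g₁.toFun x

theorem SplitsPoints.exists_emb_family {F : Set (Struc σ)} (hF : SplitsPoints F) {Y : Struc σ}
    (hY : Y ∈ F) (y : Y.carrier) (h : ℕ) :
    ∃ Z ∈ F, ∃ (g : Emb Y Z) (f : Fin h → Emb Y Z),
      Injective (fun α => (f α).toFun y) ∧ ∀ α x, x ≠ y → (f α).toFun x = g.toFun x := by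
  induction h with
  | zero => exact ⟨Y, hY, Emb.id Y, Fin.elim0, fun α => α.elim0, fun α => α.elim0⟩
  | succ h ih =>
    obtain ⟨Z, hZ, g, f, hinj, hfg⟩ := ih
    obtain ⟨Z', hZ', g₀, g₁, hne, hagree⟩ := hF Z hZ (g.toFun y)
    let f' : Fin (h + 1) → Emb Y Z' := Fin.cons (g₁.comp g) fun α => g₀.comp (f α)
    have hf'y : (fun α => (f' α).toFun y) =
        Fin.cons (g₁.toFun (g.toFun y)) fun α => g₀.toFun ((f α).toFun y) := by
      funext α
      cases α using Fin.cases <;> rfl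
    refine ⟨Z', hZ', g₀.comp g, f', ?_, ?_⟩
    · rw [hf'y, Fin.cons_injective_iff]
      refine ⟨?_, g₀.inj.comp hinj⟩
      rintro ⟨α, hα : g₀.toFun ((f α).toFun y) = g₁.toFun (g.toFun y)⟩
      by_cases hαy : (f α).toFun y = g.toFun y
      · exact hne (hαy ▸ hα)
      · rw [hagree _ hαy] at hα
        exact hαy (g₁.inj hα)
    · intro α x hx
      cases α using Fin.cases with
      | zero => exact (hagree _ fun h => hx (g.inj h)).symm
      | succ α => exact congrArg g₀.toFun (hfg α x hx)

theorem splitsPoints_treeClassN {n : ℕ} (hn : 3 ≤ n) : SplitsPoints (TreeClassN n) := by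
  rintro Y (hY | ⟨T, hT, e, -⟩) y
  · exact (hY.false y).elim
  obtain ⟨U, hU, g₀, g₁, hne, hagree⟩ := FinTree.exists_leafEmb_pair hn hT (e.toFun y).2
  exact ⟨U.leafStruc, Or.inr ⟨U, hU, strucIso_refl _⟩, g₀.comp e, g₁.comp e, hne,
    fun x hx => hagree _ fun h => hx (e.inj h)⟩

theorem exists_many_extensions_general (n : ℕ) (hn : 3 ≤ n)
    (Y : Struc treeSig) (hY : Y ∈ TreeClassN n)
    (S : Set Y.carrier) (hS : S ≠ Set.univ) (h : ℕ) :
    ∃ Z : Struc treeSig, Z ∈ TreeClassN n ∧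
      ∃ j : Emb (Y.restrict S) Z, ∃ f : Fin h → Emb Y Z,
        Function.Injective f ∧
        ∀ (α : Fin h) (x : (Y.restrict S).carrier),
          (f α).toFun ((Y.subEmb S).toFun x) = j.toFun x := by
  obtain ⟨y, hy⟩ := (Set.ne_univ_iff_exists_notMem S).mp hS
  obtain ⟨Z, hZ, g, f, hinj, hfg⟩ := (splitsPoints_treeClassN hn).exists_emb_family hY y h
  refine ⟨Z, hZ, g.comp (Y.subEmb S), f, fun α β hαβ => hinj (congrArg (·.toFun y) hαβ), ?_⟩
  rintro α ⟨x, hx⟩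
  exact hfg α x fun hxy => hy (hxy ▸ hx)

/-- **(SS2) for `𝔗_n`** (Lemma 5.4): given a tree structure `Y ∈ 𝔗_n`, a proper induced
substructure `X` of `Y`, and `h ≥ 1`, there are `Z ∈ 𝔗_n` and an embedding `j : X → Z`
admitting at least `h` pairwise distinct extensions to embeddings `Y → Z`. -/
theorem exists_many_extensions (n : ℕ) (hn : 3 ≤ n)
    (Y : Struc treeSig) (hY : Y ∈ TreeClassN n)
    (S : Set Y.carrier) (hS : S ≠ Set.univ) (h : ℕ) (hh : 1 ≤ h) :
    ∃ Z : Struc treeSig, Z ∈ TreeClassN n ∧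
      ∃ j : Emb (Y.restrict S) Z, ∃ f : Fin h → Emb Y Z,
        Function.Injective f ∧
        ∀ (α : Fin h) (x : (Y.restrict S).carrier),
          (f α).toFun ((Y.subEmb S).toFun x) = j.toFun x :=
  exists_many_extensions_general n hn Y hY S hS h

end Paper
end
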